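/- arXiv:2309.09880 — 7 statements merged into one kernel-verified Lean document; each statement's English description precedes it below -/
import Mathlib

section
/- Let w_1,...,w_M > 0 and z_1,...,z_M be real numbers. The (unique) minimizer of sum_{k=1}^M w_k (z_k - beta_k)^2 over sequences beta_1 ≤ beta_2 ≤ ... ≤ beta_M is given by beta_k = max over i ≤ k of min over j ≥ k of (sum_{l=i}^j w_l z_l) / (sum_{l=i}^j w_l). -/
open Finset

noncomputable def Aavg (w z : ℕ → ℝ) (i j : ℕ) : ℝ :=
  (∑ l ∈ Icc i j, w l * z l) / (∑ l ∈ Icc i j, w l)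

lemma Wpos {M : ℕ} {w : ℕ → ℝ} (hw : ∀ k ∈ Icc 1 M, 0 < w k) {i j : ℕ}
    (h1 : 1 ≤ i) (h2 : i ≤ j) (h3 : j ≤ M) : 0 < ∑ l ∈ Icc i j, w l :=
  Finset.sum_pos (fun l hl => hw l (by simp only [mem_Icc] at hl ⊢; omega))
    (nonempty_Icc.mpr h2)

lemma Icc_split {i m j : ℕ} (h1 : i ≤ m) (h2 : m < j) (f : ℕ → ℝ) :
    ∑ l ∈ Icc i j, f l = (∑ l ∈ Icc i m, f l) + (∑ l ∈ Icc (m+1) j, f l) := by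
  rw [← Finset.sum_union]
  · congr 1; ext a; simp only [mem_Icc, mem_union]; omega
  · rw [Finset.disjoint_left]; intro a ha hb
    simp only [mem_Icc] at ha hb; omega

lemma avg_eq {M : ℕ} {w z : ℕ → ℝ} (hw : ∀ k ∈ Icc 1 M, 0 < w k) {i m j : ℕ}
    (h1 : 1 ≤ i) (h2 : i ≤ m) (h3 : m < j) (h4 : j ≤ M) :
    Aavg w z i j * ((∑ l ∈ Icc i m, w l) + (∑ l ∈ Icc (m+1) j, w l))
      = Aavg w z i m * (∑ l ∈ Icc i m, w l)
        + Aavg w z (m+1) j * (∑ l ∈ Icc (m+1) j, w l) := by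
  have W1 : 0 < ∑ l ∈ Icc i m, w l := Wpos hw h1 h2 (le_of_lt (lt_of_lt_of_le h3 h4))
  have W2 : 0 < ∑ l ∈ Icc (m+1) j, w l := Wpos hw (by omega) h3 h4
  unfold Aavg
  rw [div_mul_cancel₀ _ W1.ne', div_mul_cancel₀ _ W2.ne', ← Icc_split h2 h3,
    div_mul_cancel₀, Icc_split h2 h3 (fun l => w l * z l)]
  rw [Icc_split h2 h3 w]; positivity

section Comp
variable {M : ℕ} {w z : ℕ → ℝ} (hw : ∀ k ∈ Icc 1 M, 0 < w k) {i m j : ℕ}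
  (h1 : 1 ≤ i) (h2 : i ≤ m) (h3 : m < j) (h4 : j ≤ M) {c : ℝ}

include hw h1 h2 h3 h4

lemma comp1 (ha : c ≤ Aavg w z i m) (hb : c < Aavg w z (m+1) j) : c < Aavg w z i j := by
  have W1 : 0 < ∑ l ∈ Icc i m, w l := Wpos hw h1 h2 (by omega)
  have W2 : 0 < ∑ l ∈ Icc (m+1) j, w l := Wpos hw (by omega) h3 h4
  have E := avg_eq hw h1 h2 h3 h4 (z := z)
  nlinarith [mul_nonneg (sub_nonneg.mpr ha) W1.le, mul_pos (sub_pos.mpr hb) W2]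

lemma comp1' (ha : c < Aavg w z i m) (hb : c ≤ Aavg w z (m+1) j) : c < Aavg w z i j := by
  have W1 : 0 < ∑ l ∈ Icc i m, w l := Wpos hw h1 h2 (by omega)
  have W2 : 0 < ∑ l ∈ Icc (m+1) j, w l := Wpos hw (by omega) h3 h4
  have E := avg_eq hw h1 h2 h3 h4 (z := z)
  nlinarith [mul_pos (sub_pos.mpr ha) W1, mul_nonneg (sub_nonneg.mpr hb) W2.le]

lemma comp2 (ha : Aavg w z i m ≤ c) (hb : Aavg w z (m+1) j ≤ c) : Aavg w z i j ≤ c := by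
  have W1 : 0 < ∑ l ∈ Icc i m, w l := Wpos hw h1 h2 (by omega)
  have W2 : 0 < ∑ l ∈ Icc (m+1) j, w l := Wpos hw (by omega) h3 h4
  have E := avg_eq hw h1 h2 h3 h4 (z := z)
  nlinarith [mul_nonneg (sub_nonneg.mpr ha) W1.le, mul_nonneg (sub_nonneg.mpr hb) W2.le]

lemma comp3 (ha : Aavg w z i j = c) (hb : c < Aavg w z (m+1) j) : Aavg w z i m < c := by
  have W1 : 0 < ∑ l ∈ Icc i m, w l := Wpos hw h1 h2 (by omega)
  have W2 : 0 < ∑ l ∈ Icc (m+1) j, w l := Wpos hw (by omega) h3 h4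
  have E := avg_eq hw h1 h2 h3 h4 (z := z)
  nlinarith [mul_pos (sub_pos.mpr hb) W2]

lemma comp4 (ha : c ≤ Aavg w z i j) (hb : Aavg w z i m < c) : c < Aavg w z (m+1) j := by
  have W1 : 0 < ∑ l ∈ Icc i m, w l := Wpos hw h1 h2 (by omega)
  have W2 : 0 < ∑ l ∈ Icc (m+1) j, w l := Wpos hw (by omega) h3 h4
  have E := avg_eq hw h1 h2 h3 h4 (z := z)
  nlinarith [mul_pos (sub_pos.mpr hb) W1]

lemma comp5 (ha : Aavg w z i j = c) (hb : c ≤ Aavg w z i m) : Aavg w z (m+1) j ≤ c := by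
  have W1 : 0 < ∑ l ∈ Icc i m, w l := Wpos hw h1 h2 (by omega)
  have W2 : 0 < ∑ l ∈ Icc (m+1) j, w l := Wpos hw (by omega) h3 h4
  have E := avg_eq hw h1 h2 h3 h4 (z := z)
  nlinarith [mul_nonneg (sub_nonneg.mpr hb) W1.le]

lemma comp6 (ha : Aavg w z i j = c) (hb : Aavg w z (m+1) j ≤ c) : c ≤ Aavg w z i m := by
  have W1 : 0 < ∑ l ∈ Icc i m, w l := Wpos hw h1 h2 (by omega)
  have W2 : 0 < ∑ l ∈ Icc (m+1) j, w l := Wpos hw (by omega) h3 h4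
  have E := avg_eq hw h1 h2 h3 h4 (z := z)
  nlinarith [mul_nonneg (sub_nonneg.mpr hb) W2.le]

end Comp


section Beta
variable {M : ℕ} {w z β : ℕ → ℝ}
  (hβ : ∀ k (h1 : 1 ≤ k) (h2 : k ≤ M),
    β k = (Icc 1 k).sup' (nonempty_Icc.mpr h1)
      (fun i => (Icc k M).inf' (nonempty_Icc.mpr h2) (fun j => Aavg w z i j)))

include hβ

lemma beta_le_of {k : ℕ} (h1 : 1 ≤ k) (h2 : k ≤ M) {c : ℝ}
    (h : ∀ i, 1 ≤ i → i ≤ k → ∃ j, k ≤ j ∧ j ≤ M ∧ Aavg w z i j ≤ c) : β k ≤ c := by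
  rw [hβ k h1 h2]
  apply Finset.sup'_le
  intro i hi
  simp only [mem_Icc] at hi
  obtain ⟨j, hj1, hj2, hj3⟩ := h i hi.1 hi.2
  exact le_trans (Finset.inf'_le _ (by simp only [mem_Icc]; omega)) hj3

lemma le_beta_of {k i : ℕ} (hi1 : 1 ≤ i) (hi2 : i ≤ k) (h2 : k ≤ M) {c : ℝ}
    (h : ∀ j, k ≤ j → j ≤ M → c ≤ Aavg w z i j) : c ≤ β k := by
  rw [hβ k (le_trans hi1 hi2) h2]
  refine le_trans ?_ (Finset.le_sup' _ (by simp only [mem_Icc]; omega : i ∈ Icc 1 k))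
  apply Finset.le_inf'
  intro j hj
  simp only [mem_Icc] at hj
  exact h j hj.1 hj.2

lemma beta_exists_le {k i : ℕ} (hi1 : 1 ≤ i) (hi2 : i ≤ k) (h2 : k ≤ M) :
    ∃ j, k ≤ j ∧ j ≤ M ∧ Aavg w z i j ≤ β k := by
  obtain ⟨j, hjmem, hje⟩ := Finset.exists_mem_eq_inf' (nonempty_Icc.mpr h2)
    (fun j => Aavg w z i j)
  simp only [mem_Icc] at hjmem
  refine ⟨j, hjmem.1, hjmem.2, ?_⟩
  have h5 : (Icc k M).inf' (nonempty_Icc.mpr h2) (fun j => Aavg w z i j) ≤ β k := by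
    rw [hβ k (le_trans hi1 hi2) h2]
    exact Finset.le_sup' (fun i => (Icc k M).inf' (nonempty_Icc.mpr h2) (fun j => Aavg w z i j))
      (by simp only [mem_Icc]; omega : i ∈ Icc 1 k)
  rw [hje] at h5
  exact h5

lemma beta_mono_step {k : ℕ} (h1 : 1 ≤ k) (h2 : k < M) : β k ≤ β (k + 1) := by
  rw [hβ k h1 (le_of_lt h2), hβ (k+1) (by omega) h2]
  apply Finset.sup'_le
  intro i hi
  simp only [mem_Icc] at hi
  refine le_trans ?_ (Finset.le_sup' _ (by simp only [mem_Icc]; omega : i ∈ Icc 1 (k+1)))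
  apply Finset.le_inf'
  intro j hj
  simp only [mem_Icc] at hj
  exact Finset.inf'_le _ (by simp only [mem_Icc]; omega)

lemma beta_mono {a b : ℕ} (h1 : 1 ≤ a) (h2 : a ≤ b) (h3 : b ≤ M) : β a ≤ β b := by
  induction b, h2 using Nat.le_induction with
  | base => exact le_rfl
  | succ n hn ih =>
      exact le_trans (ih (by omega)) (beta_mono_step hβ (by omega) (by omega))

end Beta

lemma saddle {M : ℕ} {w z β : ℕ → ℝ} (hw : ∀ k ∈ Icc 1 M, 0 < w k)
    (hβ : ∀ k (h1 : 1 ≤ k) (h2 : k ≤ M),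
      β k = (Icc 1 k).sup' (nonempty_Icc.mpr h1)
        (fun i => (Icc k M).inf' (nonempty_Icc.mpr h2) (fun j => Aavg w z i j)))
    {k : ℕ} (h1 : 1 ≤ k) (h2 : k ≤ M) :
    ∃ i j, 1 ≤ i ∧ i ≤ k ∧ k ≤ j ∧ j ≤ M ∧ Aavg w z i j = β k ∧
      (∀ j', i ≤ j' → j' ≤ M → β k ≤ Aavg w z i j') ∧
      (∀ i', 1 ≤ i' → i' ≤ j → Aavg w z i' j ≤ β k) := by
  obtain ⟨i0, hi0mem, hsup⟩ := Finset.exists_mem_eq_sup' (nonempty_Icc.mpr h1)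
    (fun i => (Icc k M).inf' (nonempty_Icc.mpr h2) (fun j => Aavg w z i j))
  simp only [mem_Icc] at hi0mem
  obtain ⟨hi01, hi0k⟩ := hi0mem
  have hbv : β k = (Icc k M).inf' (nonempty_Icc.mpr h2) (fun j => Aavg w z i0 j) := by
    rw [hβ k h1 h2]; exact hsup
  obtain ⟨j0, hj0mem, hinf⟩ := Finset.exists_mem_eq_inf' (nonempty_Icc.mpr h2)
    (fun j => Aavg w z i0 j)
  simp only [mem_Icc] at hj0mem
  obtain ⟨hkj0, hj0M⟩ := hj0mem
  have hEq : Aavg w z i0 j0 = β k := by rw [hbv, hinf]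
  have hα : ∀ j', k ≤ j' → j' ≤ M → β k ≤ Aavg w z i0 j' := by
    intro j' ha hb
    rw [hbv]
    exact Finset.inf'_le _ (by simp only [mem_Icc]; omega)
  have hbfull : ∀ i', 1 ≤ i' → i' ≤ j0 → Aavg w z i' j0 ≤ β k := by
    intro i' ha hb
    rcases lt_trichotomy i' i0 with hlt | heq | hgt
    · obtain ⟨m, rfl⟩ : ∃ m, i0 = m + 1 := ⟨i0 - 1, by omega⟩
      have hstep : Aavg w z i' m ≤ β k := by
        by_contra hc
        push_neg at hc
        obtain ⟨j', hj1, hj2, hj3⟩ := beta_exists_le hβ ha (by omega) h2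
        have := comp1' hw ha (by omega) (by omega : m < j') hj2 hc (hα j' hj1 hj2)
        linarith
      exact comp2 hw ha (by omega) (by omega : m < j0) hj0M hstep (le_of_eq hEq)
    · rw [heq]; exact le_of_eq hEq
    · by_contra hc
      push_neg at hc
      obtain ⟨m, rfl⟩ : ∃ m, i' = m + 1 := ⟨i' - 1, by omega⟩
      have hL : Aavg w z i0 m < β k :=
        comp3 hw hi01 (by omega : i0 ≤ m) (by omega : m < j0) hj0M hEq hc
      rcases le_or_gt (m + 1) k with hik | hik
      · obtain ⟨j', hj1, hj2, hj3⟩ := beta_exists_le hβ (by omega) hik h2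
        have := comp4 hw hi01 (by omega : i0 ≤ m) (by omega : m < j') hj2
          (hα j' hj1 hj2) hL
        linarith
      · have := hα m (by omega) (by omega)
        linarith
  have hαfull : ∀ j', i0 ≤ j' → j' ≤ M → β k ≤ Aavg w z i0 j' := by
    intro j' ha hb
    rcases le_or_gt k j' with hk | hk
    · exact hα j' hk hb
    · have h6 := hbfull (j' + 1) (by omega) (by omega)
      exact comp6 hw hi01 ha (by omega : j' < j0) hj0M hEq h6
  exact ⟨i0, j0, hi01, hi0k, hkj0, hj0M, hEq, hαfull, hbfull⟩

lemma beta_const {M : ℕ} {w z β : ℕ → ℝ}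
    (hβ : ∀ k (h1 : 1 ≤ k) (h2 : k ≤ M),
      β k = (Icc 1 k).sup' (nonempty_Icc.mpr h1)
        (fun i => (Icc k M).inf' (nonempty_Icc.mpr h2) (fun j => Aavg w z i j)))
    {i k j : ℕ} (hi1 : 1 ≤ i) (hik : i ≤ k) (hkj : k ≤ j) (hjM : j ≤ M)
    (hα : ∀ j', i ≤ j' → j' ≤ M → β k ≤ Aavg w z i j')
    (hbf : ∀ i', 1 ≤ i' → i' ≤ j → Aavg w z i' j ≤ β k) :
    ∀ k', i ≤ k' → k' ≤ j → β k' = β k := by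
  intro k' ha hb
  rcases le_or_gt k' k with h | h
  · refine le_antisymm (beta_mono hβ (by omega) h (le_trans hkj hjM)) ?_
    exact le_beta_of hβ hi1 ha (by omega)
      (fun j' hj1 hj2 => hα j' (by omega) hj2)
  · refine le_antisymm ?_ (beta_mono hβ (by omega) (le_of_lt h) (le_trans hb hjM))
    apply beta_le_of hβ (by omega) (le_trans hb hjM)
    intro i' h1' h2'
    exact ⟨j, hb, hjM, hbf i' h1' (le_trans h2' hb)⟩

lemma Gfacts {M : ℕ} {w z β : ℕ → ℝ} (hw : ∀ k ∈ Icc 1 M, 0 < w k)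
    (hβ : ∀ k (h1 : 1 ≤ k) (h2 : k ≤ M),
      β k = (Icc 1 k).sup' (nonempty_Icc.mpr h1)
        (fun i => (Icc k M).inf' (nonempty_Icc.mpr h2) (fun j => Aavg w z i j))) :
    ∀ m, m ≤ M → 0 ≤ (∑ l ∈ Icc 1 m, w l * (z l - β l)) ∧
      ((m = M ∨ (1 ≤ m ∧ β (m+1) ≠ β m)) → (∑ l ∈ Icc 1 m, w l * (z l - β l)) = 0) := by
  intro m
  induction m using Nat.strong_induction_on with
  | _ m IH =>
    intro hmM
    rcases Nat.eq_zero_or_pos m with rfl | hm1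
    · constructor
      · simp
      · intro _; simp
    set p := sInf {i | 1 ≤ i ∧ β i = β m} with hpdef
    have hpmem : p ∈ {i | 1 ≤ i ∧ β i = β m} := Nat.sInf_mem ⟨m, ⟨hm1, rfl⟩⟩
    obtain ⟨hp1, hpβ⟩ := hpmem
    have hpm : p ≤ m := Nat.sInf_le ⟨hm1, rfl⟩
    have hGp : (∑ l ∈ Icc 1 (p-1), w l * (z l - β l)) = 0 := by
      rcases Nat.eq_or_lt_of_le hp1 with h | h
      · rw [show p - 1 = 0 by omega, Finset.Icc_eq_empty (by omega), Finset.sum_empty]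
      · have hne : β p ≠ β (p-1) := by
          intro hEq'
          have hmem2 : p - 1 ∈ {i | 1 ≤ i ∧ β i = β m} := ⟨by omega, by rw [← hEq', hpβ]⟩
          have := Nat.sInf_le hmem2
          omega
        have := (IH (p-1) (by omega) (by omega)).2
          (Or.inr ⟨by omega, by rw [show p - 1 + 1 = p by omega]; exact hne⟩)
        exact this
    have hconst : ∀ l, p ≤ l → l ≤ m → β l = β m := by
      intro l hl1 hl2
      have hle : β l ≤ β m := beta_mono hβ (by omega) hl2 hmM
      have hge : β p ≤ β l := beta_mono hβ hp1 hl1 (by omega)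
      rw [hpβ] at hge
      linarith
    obtain ⟨i, j, hi1, hip, hpj, hjM, hEq, hα, hbf⟩ := saddle hw hβ hp1 (le_trans hpm hmM)
    have hi : i = p := by
      have hconsti : β i = β p :=
        beta_const hβ hi1 hip hpj hjM hα hbf i le_rfl (le_trans hip hpj)
      have : p ≤ i := Nat.sInf_le ⟨hi1, by rw [hconsti, hpβ]⟩
      omega
    subst hi
    have hsplit : (∑ l ∈ Icc 1 m, w l * (z l - β l)) =
        (∑ l ∈ Icc 1 (p-1), w l * (z l - β l)) + (∑ l ∈ Icc p m, w l * (z l - β l)) := by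
      rcases Nat.eq_or_lt_of_le hp1 with h | h
      · rw [show p - 1 = 0 by omega, Finset.Icc_eq_empty (by omega : ¬ (1:ℕ) ≤ 0),
          Finset.sum_empty, zero_add, show p = 1 by omega]
      · rw [Icc_split (show (1:ℕ) ≤ p - 1 by omega) (show p - 1 < m by omega),
          show p - 1 + 1 = p by omega]
    have hblocksum : ∀ n, p ≤ n → n ≤ m →
        (∑ l ∈ Icc p n, w l * (z l - β l)) = (∑ l ∈ Icc p n, w l) * (Aavg w z p n - β m) := by
      intro n h1n h2n
      have hWp := Wpos hw hp1 h1n (le_trans h2n hmM)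
      have e1 : ∑ l ∈ Icc p n, w l * (z l - β l) = ∑ l ∈ Icc p n, (w l * z l - w l * β m) := by
        apply Finset.sum_congr rfl
        intro l hl
        simp only [mem_Icc] at hl
        rw [hconst l hl.1 (le_trans hl.2 h2n)]
        ring
      rw [e1, Finset.sum_sub_distrib, ← Finset.sum_mul]
      unfold Aavg
      field_simp
    constructor
    · rw [hsplit, hGp, zero_add, hblocksum m hpm le_rfl]
      have hA : β m ≤ Aavg w z p m := by
        rw [← hpβ]; exact hα m hpm hmM
      exact mul_nonneg (Wpos hw hp1 hpm hmM).le (by linarith)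
    · intro hbdry
      have hjle : ∀ j', p ≤ j' → j' ≤ M → β j' = β m → j' ≤ m := by
        intro j' h1' h2' h3'
        by_contra hcj
        push_neg at hcj
        rcases hbdry with rfl | ⟨_, hne⟩
        · omega
        · have e1 : β m ≤ β (m+1) := beta_mono_step hβ (by omega) (by omega)
          have e2 : β (m+1) ≤ β j' := beta_mono hβ (by omega) (by omega) h2'
          rw [h3'] at e2
          exact hne (le_antisymm e2 e1)
      have hiter : ∀ n jj, p ≤ jj → jj ≤ m → m - jj ≤ n →
          Aavg w z p jj = β m → Aavg w z p m = β m := by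
        intro n
        induction n with
        | zero =>
          intro jj h1' h2' h3' h4'
          rw [show jj = m by omega] at h4'
          exact h4'
        | succ n ihn =>
          intro jj hj1 hj2 hj3 hj4
          rcases eq_or_lt_of_le hj2 with rfl | hlt
          · exact hj4
          · obtain ⟨i1, j1, hi11, hik1, hkj1, hjM1, hEq1, hα1, hbf1⟩ :=
              saddle hw hβ (k := jj+1) (by omega) (by omega)
            have hβk1 : β (jj+1) = β m := hconst (jj+1) (by omega) (by omega)
            have hc1 : β j1 = β (jj+1) :=
              beta_const hβ hi11 hik1 hkj1 hjM1 hα1 hbf1 j1 (le_trans hik1 hkj1) le_rfl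
            have hj1m : j1 ≤ m := hjle j1 (by omega) hjM1 (by rw [hc1, hβk1])
            have h7 : Aavg w z p j1 ≤ β m := by
              rw [← hβk1]
              exact hbf1 p hp1 (by omega)
            have h8 : β m ≤ Aavg w z p j1 := by
              rw [← hpβ]
              exact hα j1 (by omega) hjM1
            exact ihn j1 (by omega) hj1m (by omega) (le_antisymm h7 h8)
      have hjm : j ≤ m := by
        apply hjle j hpj hjM
        have : β j = β p := beta_const hβ hp1 (le_refl p) hpj hjM hα hbf j hpj le_rfl
        rw [this, hpβ]
      have hApm : Aavg w z p m = β m :=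
        hiter (m - j) j hpj hjm le_rfl (by rw [hEq, hpβ])
      rw [hsplit, hGp, zero_add, hblocksum m hpm le_rfl, hApm, sub_self, mul_zero]

lemma Tnonneg {M : ℕ} {w z β : ℕ → ℝ} (hw : ∀ k ∈ Icc 1 M, 0 < w k)
    (hβ : ∀ k (h1 : 1 ≤ k) (h2 : k ≤ M),
      β k = (Icc 1 k).sup' (nonempty_Icc.mpr h1)
        (fun i => (Icc k M).inf' (nonempty_Icc.mpr h2) (fun j => Aavg w z i j)))
    (γ : ℕ → ℝ) (hγ : ∀ k, 1 ≤ k → k < M → γ k ≤ γ (k+1)) :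
    0 ≤ ∑ k ∈ Icc 1 M, w k * (z k - β k) * (β k - γ k) := by
  have key : ∀ n, n ≤ M →
      (∑ l ∈ Icc 1 n, w l * (z l - β l)) * (β n - γ n)
        ≤ ∑ k ∈ Icc 1 n, w k * (z k - β k) * (β k - γ k) := by
    intro n
    induction n with
    | zero => intro _; simp
    | succ n ih =>
      intro h
      rw [Finset.sum_Icc_succ_top (by omega : 1 ≤ n + 1),
        Finset.sum_Icc_succ_top (by omega : 1 ≤ n + 1)]
      have ih' := ih (by omega)
      have hkey : 0 ≤ (∑ l ∈ Icc 1 n, w l * (z l - β l))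
          * ((β n - γ n) - (β (n+1) - γ (n+1))) := by
        rcases Nat.eq_zero_or_pos n with rfl | hn1
        · simp
        · have hG := (Gfacts hw hβ n (by omega)).1
          rcases eq_or_ne (β (n+1)) (β n) with he | hne
          · have hγn := hγ n hn1 (by omega)
            have he2 : (β n - γ n) - (β (n+1) - γ (n+1)) = γ (n+1) - γ n := by
              rw [he]; ring
            rw [he2]
            exact mul_nonneg hG (by linarith)
          · rw [(Gfacts hw hβ n (by omega)).2 (Or.inr ⟨hn1, hne⟩), zero_mul]
      nlinarith [ih', hkey]
  have h0 := key M le_rfl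
  rw [(Gfacts hw hβ M le_rfl).2 (Or.inl rfl), zero_mul] at h0
  exact h0

theorem stmt_2 (M : ℕ) (hM : 1 ≤ M) (w z : ℕ → ℝ)
    (hw : ∀ k ∈ Finset.Icc 1 M, 0 < w k)
    (βstar : ℕ → ℝ)
    (hβstar : ∀ k, ∀ (h1 : 1 ≤ k) (h2 : k ≤ M),
      βstar k = (Finset.Icc 1 k).sup' (Finset.nonempty_Icc.mpr h1)
        (fun i => (Finset.Icc k M).inf' (Finset.nonempty_Icc.mpr h2)
          (fun j => (∑ l ∈ Finset.Icc i j, w l * z l) / (∑ l ∈ Finset.Icc i j, w l)))) :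
    (∀ k, 1 ≤ k → k < M → βstar k ≤ βstar (k + 1)) ∧
    (∀ β : ℕ → ℝ, (∀ k, 1 ≤ k → k < M → β k ≤ β (k + 1)) →
      ∑ k ∈ Finset.Icc 1 M, w k * (z k - βstar k) ^ 2
        ≤ ∑ k ∈ Finset.Icc 1 M, w k * (z k - β k) ^ 2) ∧
    (∀ β : ℕ → ℝ, (∀ k, 1 ≤ k → k < M → β k ≤ β (k + 1)) →
      ∑ k ∈ Finset.Icc 1 M, w k * (z k - β k) ^ 2
        = ∑ k ∈ Finset.Icc 1 M, w k * (z k - βstar k) ^ 2 →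
      ∀ k ∈ Finset.Icc 1 M, β k = βstar k) := by
  have hβ : ∀ k (h1 : 1 ≤ k) (h2 : k ≤ M),
      βstar k = (Icc 1 k).sup' (nonempty_Icc.mpr h1)
        (fun i => (Icc k M).inf' (nonempty_Icc.mpr h2) (fun j => Aavg w z i j)) := hβstar
  have hmono : ∀ k, 1 ≤ k → k < M → βstar k ≤ βstar (k+1) :=
    fun k a b => beta_mono_step hβ a b
  have hwnn : ∀ k ∈ Icc 1 M, (0:ℝ) ≤ w k := fun k hk => (hw k hk).le
  have hdecomp : ∀ γ : ℕ → ℝ,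
      ∑ k ∈ Icc 1 M, w k * (z k - γ k)^2
        = ∑ k ∈ Icc 1 M, w k * (z k - βstar k)^2
          + 2 * (∑ k ∈ Icc 1 M, w k * (z k - βstar k) * (βstar k - γ k))
          + ∑ k ∈ Icc 1 M, w k * (βstar k - γ k)^2 := by
    intro γ
    rw [Finset.mul_sum, ← Finset.sum_add_distrib, ← Finset.sum_add_distrib]
    exact Finset.sum_congr rfl (fun k _ => by ring)
  refine ⟨hmono, ?_, ?_⟩
  · intro γ hγ
    have hT := Tnonneg hw hβ γ hγ
    have hQ : 0 ≤ ∑ k ∈ Icc 1 M, w k * (βstar k - γ k)^2 :=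
      Finset.sum_nonneg (fun k hk => mul_nonneg (hwnn k hk) (sq_nonneg _))
    rw [hdecomp γ]
    linarith
  · intro γ hγ heq k hk
    have hT := Tnonneg hw hβ γ hγ
    have hQ : 0 ≤ ∑ k ∈ Icc 1 M, w k * (βstar k - γ k)^2 :=
      Finset.sum_nonneg (fun k hk => mul_nonneg (hwnn k hk) (sq_nonneg _))
    have hd := hdecomp γ
    rw [heq] at hd
    have hQ0 : ∑ k ∈ Icc 1 M, w k * (βstar k - γ k)^2 = 0 := by linarith
    have hterm := (Finset.sum_eq_zero_iff_of_nonneg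
      (fun k hk => mul_nonneg (hwnn k hk) (sq_nonneg _))).mp hQ0 k hk
    have hwk := hw k hk
    have hsq : (βstar k - γ k)^2 = 0 := by
      rcases mul_eq_zero.mp hterm with h | h
      · exact absurd h hwk.ne'
      · exact h
    have : βstar k - γ k = 0 := by
      exact pow_eq_zero_iff (by norm_num) |>.mp hsq
    linarith
end

section
/- Let w_1,...,w_M > 0, z_1,...,z_M real, and a ≤ b. The minimizer of sum_{k=1}^M w_k(z_k - mu_k)^2 subject to a ≤ mu_1 ≤ ... ≤ mu_M ≤ b is obtained by clipping the unconstrained isotonic regression solution to [a,b]: mu_k = min(b, max(a, mu_k*)), where mu_k* = max_{1≤i≤k} min_{k≤j≤M} (sum_{l=i}^j w_l z_l)/(sum_{l=i}^j w_l). -/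
open Finset



private lemma chain_mono (v : ℕ → ℝ) (M : ℕ)
    (hmono : ∀ k, 1 ≤ k → k < M → v k ≤ v (k + 1)) :
    ∀ i j, 1 ≤ i → i ≤ j → j ≤ M → v i ≤ v j := by
  intro i j h1 hij hjM
  induction j, hij using Nat.le_induction with
  | base => exact le_rfl
  | succ j hij ih =>
      exact le_trans (ih (by omega)) (hmono j (by omega) (by omega))

private lemma lin_nonneg {c d ε : ℝ} (hε : 0 < ε)
    (h : ∀ t ∈ Set.Ioc (0:ℝ) ε, 0 ≤ c * t + d * t ^ 2) : 0 ≤ c := by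
  by_contra hc
  push_neg at hc
  have hd : 0 ≤ |d| := abs_nonneg d
  set t := min ε (-c / (|d| + 1)) with ht
  have h1 : 0 < -c / (|d| + 1) := div_pos (by linarith) (by linarith)
  have ht0 : 0 < t := lt_min hε h1
  have htε : t ≤ ε := min_le_left _ _
  have ht2 : t ≤ -c / (|d| + 1) := min_le_right _ _
  have ht3 : t * (|d| + 1) ≤ -c := by
    rw [← le_div_iff₀ (by linarith : (0:ℝ) < |d| + 1)]
    exact ht2
  have hval := h t ⟨ht0, htε⟩
  have hdd : d * t ^ 2 ≤ |d| * t ^ 2 :=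
    mul_le_mul_of_nonneg_right (le_abs_self d) (sq_nonneg t)
  nlinarith [mul_pos ht0 ht0]

private lemma clip_sq_le {lo hi c x : ℝ} (h1 : lo ≤ c) (h2 : c ≤ hi) :
    (c - min hi (max lo x)) ^ 2 ≤ (c - x) ^ 2 := by
  rcases le_total x lo with h | h
  · rw [max_eq_left h, min_eq_right (le_trans h1 h2)]
    nlinarith
  · rw [max_eq_right h]
    rcases le_total x hi with h' | h'
    · rw [min_eq_right h']
    · rw [min_eq_left h']
      nlinarith

private lemma clip_diff_mono {a b x y : ℝ} (hab : a ≤ b) (hxy : x ≤ y) :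
    x - min b (max a x) ≤ y - min b (max a y) := by
  simp only [min_def, max_def]
  split_ifs <;> linarith


private lemma exists_min (M : ℕ) (hM : 1 ≤ M) (w z : ℕ → ℝ)
    (hw : ∀ k ∈ Finset.Icc 1 M, 0 < w k) :
    ∃ g : ℕ → ℝ, (∀ k, 1 ≤ k → k < M → g k ≤ g (k + 1)) ∧
      ∀ v : ℕ → ℝ, (∀ k, 1 ≤ k → k < M → v k ≤ v (k + 1)) →
        ∑ k ∈ Icc 1 M, w k * (z k - g k) ^ 2 ≤ ∑ k ∈ Icc 1 M, w k * (z k - v k) ^ 2 := by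
  have hne : (Icc 1 M).Nonempty := ⟨1, by simp [hM]⟩
  set lo := (Icc 1 M).inf' hne z with hlo
  set hi := (Icc 1 M).sup' hne z with hhi
  have hlohi : lo ≤ hi := le_trans (inf'_le z (by simp [hM] : 1 ∈ Icc 1 M))
    (le_sup' z (by simp [hM] : 1 ∈ Icc 1 M))
  set S : Set (ℕ → ℝ) :=
    {v | (∀ k, 1 ≤ k → k < M → v k ≤ v (k + 1)) ∧ ∀ k, v k ∈ Set.Icc lo hi} with hS
  have hPcompact : IsCompact (Set.pi Set.univ fun _ : ℕ => Set.Icc lo hi) :=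
    isCompact_univ_pi fun _ => isCompact_Icc
  have hSclosed : IsClosed S := by
    have h1 : IsClosed {v : ℕ → ℝ | ∀ k, 1 ≤ k → k < M → v k ≤ v (k + 1)} := by
      have : {v : ℕ → ℝ | ∀ k, 1 ≤ k → k < M → v k ≤ v (k + 1)} =
          ⋂ k, ⋂ (_ : 1 ≤ k), ⋂ (_ : k < M), {v : ℕ → ℝ | v k ≤ v (k + 1)} := by
        ext v; simp
      rw [this]
      exact isClosed_iInter fun k => isClosed_iInter fun _ => isClosed_iInter fun _ =>
        isClosed_le (continuous_apply k) (continuous_apply (k + 1))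
    have h2 : IsClosed {v : ℕ → ℝ | ∀ k, v k ∈ Set.Icc lo hi} := by
      have : {v : ℕ → ℝ | ∀ k, v k ∈ Set.Icc lo hi} =
          ⋂ k, (fun v : ℕ → ℝ => v k) ⁻¹' (Set.Icc lo hi) := by
        ext v; simp
      rw [this]
      exact isClosed_iInter fun k => IsClosed.preimage (continuous_apply k) isClosed_Icc
    exact h1.inter h2
  have hScompact : IsCompact S := by
    refine hPcompact.of_isClosed_subset hSclosed ?_
    intro v hv
    simp only [Set.mem_pi, Set.mem_univ, forall_true_left]
    intro k
    exact hv.2 k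
  have hSne : S.Nonempty := ⟨fun _ => lo, fun _ _ _ => le_rfl, fun _ => ⟨le_rfl, hlohi⟩⟩
  have hFcont : Continuous (fun v : ℕ → ℝ => ∑ k ∈ Icc 1 M, w k * (z k - v k) ^ 2) :=
    continuous_finset_sum _ fun k _ =>
      continuous_const.mul ((continuous_const.sub (continuous_apply k)).pow 2)
  obtain ⟨g, hgS, hgmin⟩ := hScompact.exists_isMinOn hSne hFcont.continuousOn
  refine ⟨g, hgS.1, ?_⟩
  intro v hv
  set v' : ℕ → ℝ := fun k => min hi (max lo (v k)) with hv'
  have hv'S : v' ∈ S := by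
    constructor
    · intro k h1 h2
      exact min_le_min le_rfl (max_le_max le_rfl (hv k h1 h2))
    · intro k
      exact ⟨le_min hlohi (le_max_left _ _), min_le_left _ _⟩
  have step1 : ∑ k ∈ Icc 1 M, w k * (z k - g k) ^ 2 ≤ ∑ k ∈ Icc 1 M, w k * (z k - v' k) ^ 2 :=
    isMinOn_iff.mp hgmin v' hv'S
  have step2 : ∑ k ∈ Icc 1 M, w k * (z k - v' k) ^ 2 ≤ ∑ k ∈ Icc 1 M, w k * (z k - v k) ^ 2 := by
    refine Finset.sum_le_sum fun k hk => ?_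
    refine mul_le_mul_of_nonneg_left ?_ (le_of_lt (hw k hk))
    exact clip_sq_le (inf'_le z hk) (le_sup' z hk)
  linarith

private lemma vi_lemma (M : ℕ) (w z g : ℕ → ℝ)
    (hmin : ∀ v : ℕ → ℝ, (∀ k, 1 ≤ k → k < M → v k ≤ v (k + 1)) →
        ∑ k ∈ Icc 1 M, w k * (z k - g k) ^ 2 ≤ ∑ k ∈ Icc 1 M, w k * (z k - v k) ^ 2)
    (δ : ℕ → ℝ) (ε : ℝ) (hε : 0 < ε)
    (hpert : ∀ t ∈ Set.Ioc (0:ℝ) ε, ∀ k, 1 ≤ k → k < M →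
        g k + t * δ k ≤ g (k + 1) + t * δ (k + 1)) :
    0 ≤ ∑ k ∈ Icc 1 M, w k * (g k - z k) * δ k := by
  have key : ∀ t ∈ Set.Ioc (0:ℝ) ε,
      0 ≤ (2 * ∑ k ∈ Icc 1 M, w k * (g k - z k) * δ k) * t
          + (∑ k ∈ Icc 1 M, w k * δ k ^ 2) * t ^ 2 := by
    intro t ht
    have h1 := hmin (fun k => g k + t * δ k) (hpert t ht)
    have h2 : ∑ k ∈ Icc 1 M, w k * (z k - (g k + t * δ k)) ^ 2
        = ∑ k ∈ Icc 1 M, (w k * (z k - g k) ^ 2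
            + (2 * (w k * (g k - z k) * δ k)) * t + (w k * δ k ^ 2) * t ^ 2) := by
      refine Finset.sum_congr rfl fun k _ => by ring
    rw [h2, Finset.sum_add_distrib, Finset.sum_add_distrib, ← Finset.sum_mul, ← Finset.sum_mul,
      ← Finset.mul_sum] at h1
    linarith
  have := lin_nonneg hε key
  linarith

private lemma icc_eq_ioc (i j : ℕ) (hi : 1 ≤ i) : Icc i j = Ioc (i - 1) j := by
  ext l
  simp only [mem_Icc, mem_Ioc]
  omega

private lemma tail_props (M : ℕ) (hM : 1 ≤ M) (w z g : ℕ → ℝ)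
    (hmono : ∀ k, 1 ≤ k → k < M → g k ≤ g (k + 1))
    (hmin : ∀ v : ℕ → ℝ, (∀ k, 1 ≤ k → k < M → v k ≤ v (k + 1)) →
        ∑ k ∈ Icc 1 M, w k * (z k - g k) ^ 2 ≤ ∑ k ∈ Icc 1 M, w k * (z k - v k) ^ 2) :
    (∀ j : ℕ, 0 ≤ ∑ l ∈ Ioc j M, w l * (g l - z l)) ∧
    (∑ l ∈ Ioc 0 M, w l * (g l - z l)) = 0 ∧
    (∀ k, 1 ≤ k → k < M → g k < g (k + 1) → (∑ l ∈ Ioc k M, w l * (g l - z l)) = 0) := by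
  -- total sum ≤ 0 via δ = -1
  have hneg : 0 ≤ ∑ k ∈ Icc 1 M, w k * (g k - z k) * (-1 : ℝ) := by
    refine vi_lemma M w z g hmin (fun _ => (-1 : ℝ)) 1 one_pos ?_
    intro t ht k h1 h2
    have := hmono k h1 h2
    linarith
  -- tails ≥ 0 via upper-set indicators
  have htail : ∀ j : ℕ, 0 ≤ ∑ l ∈ Ioc j M, w l * (g l - z l) := by
    intro j
    have h := vi_lemma M w z g hmin (fun l => if j + 1 ≤ l then (1 : ℝ) else 0) 1 one_pos ?_
    · have heq : ∑ k ∈ Icc 1 M, w k * (g k - z k) * (if j + 1 ≤ k then (1 : ℝ) else 0)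
          = ∑ l ∈ Ioc j M, w l * (g l - z l) := by
        rw [Finset.sum_congr rfl (fun k _ => by rw [mul_ite, mul_one, mul_zero]),
          ← Finset.sum_filter]
        congr 1
        ext l
        simp only [mem_filter, mem_Icc, mem_Ioc]
        omega
      rw [heq] at h
      exact h
    · intro t ht k h1 h2
      have hδ : (if j + 1 ≤ k then (1:ℝ) else 0) ≤ (if j + 1 ≤ k + 1 then (1:ℝ) else 0) := by
        split_ifs <;> norm_num <;> omega
      have := hmono k h1 h2
      nlinarith [ht.1.le]
  refine ⟨htail, ?_, ?_⟩
  · have h0 : ∑ l ∈ Ioc 0 M, w l * (g l - z l) = ∑ k ∈ Icc 1 M, w k * (g k - z k) := by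
      rw [icc_eq_ioc 1 M le_rfl]
    have h1 := htail 0
    rw [h0]
    have : ∑ k ∈ Icc 1 M, w k * (g k - z k) * (-1 : ℝ)
        = -∑ k ∈ Icc 1 M, w k * (g k - z k) := by
      rw [← Finset.sum_neg_distrib]
      exact Finset.sum_congr rfl fun k _ => by ring
    rw [this] at hneg
    rw [h0] at h1
    linarith
  · intro k h1 h2 hlt
    have hdown : 0 ≤ ∑ l ∈ Icc 1 M, w l * (g l - z l) * (if k + 1 ≤ l then (-1 : ℝ) else 0) := by
      refine vi_lemma M w z g hmin (fun l => if k + 1 ≤ l then (-1 : ℝ) else 0)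
        (g (k + 1) - g k) (by linarith) ?_
      intro t ht k' h1' h2'
      rcases lt_trichotomy k' k with hc | hc | hc
      · have : ¬ (k + 1 ≤ k') := by omega
        have : ¬ (k + 1 ≤ k' + 1) := by omega
        simp only [if_neg ‹¬ (k + 1 ≤ k')›, if_neg ‹¬ (k + 1 ≤ k' + 1)›]
        have := hmono k' h1' h2'
        linarith
      · subst hc
        have : ¬ (k' + 1 ≤ k') := by omega
        simp only [if_neg this, if_pos (le_refl (k' + 1))]
        have := ht.2
        linarith
      · have ha : k + 1 ≤ k' := hc
        have hb : k + 1 ≤ k' + 1 := by omega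
        simp only [if_pos ha, if_pos hb]
        have := hmono k' h1' h2'
        linarith
    have heq : ∑ l ∈ Icc 1 M, w l * (g l - z l) * (if k + 1 ≤ l then (-1 : ℝ) else 0)
        = -∑ l ∈ Ioc k M, w l * (g l - z l) := by
      rw [← Finset.sum_neg_distrib]
      rw [Finset.sum_congr rfl (fun l _ => show w l * (g l - z l) * (if k + 1 ≤ l then (-1:ℝ) else 0)
        = if k + 1 ≤ l then -(w l * (g l - z l)) else 0 by split_ifs <;> ring)]
      rw [← Finset.sum_filter]
      congr 1
      ext l
      simp only [mem_filter, mem_Icc, mem_Ioc]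
      omega
    rw [heq] at hdown
    have := htail k
    linarith


private lemma formula_eq (M : ℕ) (hM : 1 ≤ M) (w z g : ℕ → ℝ)
    (hw : ∀ k ∈ Finset.Icc 1 M, 0 < w k)
    (hmono : ∀ k, 1 ≤ k → k < M → g k ≤ g (k + 1))
    (ht1 : ∀ j : ℕ, 0 ≤ ∑ l ∈ Ioc j M, w l * (g l - z l))
    (ht2 : (∑ l ∈ Ioc 0 M, w l * (g l - z l)) = 0)
    (ht3 : ∀ k, 1 ≤ k → k < M → g k < g (k + 1) → (∑ l ∈ Ioc k M, w l * (g l - z l)) = 0) :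
    ∀ k (h1 : 1 ≤ k) (h2 : k ≤ M),
      (Finset.Icc 1 k).sup' (Finset.nonempty_Icc.mpr h1)
        (fun i => (Finset.Icc k M).inf' (Finset.nonempty_Icc.mpr h2)
          (fun j => (∑ l ∈ Finset.Icc i j, w l * z l) / (∑ l ∈ Finset.Icc i j, w l)))
      = g k := by
  intro k h1 h2
  have hchain := chain_mono g M hmono
  have hWpos : ∀ i j, 1 ≤ i → i ≤ j → j ≤ M → 0 < ∑ l ∈ Icc i j, w l := by
    intro i j hi hij hjM
    refine Finset.sum_pos (fun l hl => hw l ?_) ⟨i, mem_Icc.mpr ⟨le_rfl, hij⟩⟩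
    rw [mem_Icc] at hl ⊢
    omega
  -- interval sums in terms of tails
  have hsplit : ∀ i j, 1 ≤ i → i ≤ j + 1 → j ≤ M →
      ∑ l ∈ Icc i j, w l * (g l - z l)
        = (∑ l ∈ Ioc (i - 1) M, w l * (g l - z l)) - ∑ l ∈ Ioc j M, w l * (g l - z l) := by
    intro i j hi hij hjM
    have := Finset.sum_Ioc_consecutive (fun l => w l * (g l - z l))
      (show i - 1 ≤ j by omega) (show j ≤ M by omega)
    rw [icc_eq_ioc i j hi]
    linarith
  -- block endpoints
  set Bq := (Icc k M).filter (fun j => g j = g k) with hBq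
  have hBqne : Bq.Nonempty := ⟨k, by simp [hBq, mem_filter, mem_Icc, h2]⟩
  set q := Bq.max' hBqne with hq
  have hqmem : q ∈ Bq := Bq.max'_mem hBqne
  rw [hBq, mem_filter, mem_Icc] at hqmem
  obtain ⟨⟨hkq, hqM⟩, hgq⟩ := hqmem
  have hTq : (∑ l ∈ Ioc q M, w l * (g l - z l)) = 0 := by
    rcases eq_or_lt_of_le hqM with hqM' | hqM'
    · rw [hqM']; simp
    · refine ht3 q (by omega) hqM' ?_
      have hne : g (q + 1) ≠ g k := by
        intro hcon
        have hmem : q + 1 ∈ Bq := by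
          rw [hBq, mem_filter, mem_Icc]
          exact ⟨⟨by omega, by omega⟩, hcon⟩
        have := Bq.le_max' (q + 1) hmem
        omega
      have hle : g q ≤ g (q + 1) := hmono q (by omega) hqM'
      rcases lt_or_eq_of_le hle with h | h
      · exact h
      · exact absurd (h ▸ hgq) hne
  set Bp := (Icc 1 k).filter (fun i => g i = g k) with hBp
  have hBpne : Bp.Nonempty := ⟨k, by simp [hBp, mem_filter, mem_Icc, h1]⟩
  set p := Bp.min' hBpne with hp
  have hpmem : p ∈ Bp := Bp.min'_mem hBpne
  rw [hBp, mem_filter, mem_Icc] at hpmem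
  obtain ⟨⟨h1p, hpk⟩, hgp⟩ := hpmem
  have hTp : (∑ l ∈ Ioc (p - 1) M, w l * (g l - z l)) = 0 := by
    rcases eq_or_lt_of_le h1p with h1p' | h1p'
    · rw [← h1p']; simpa using ht2
    · have hp1 : p - 1 + 1 = p := by omega
      refine ht3 (p - 1) (by omega) (by omega) ?_
      rw [hp1]
      have hne : g (p - 1) ≠ g k := by
        intro hcon
        have hmem : p - 1 ∈ Bp := by
          rw [hBp, mem_filter, mem_Icc]
          exact ⟨⟨by omega, by omega⟩, hcon⟩
        have := Bp.min'_le (p - 1) hmem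
        omega
      have hle : g (p - 1) ≤ g p := by
        have := hmono (p - 1) (by omega) (by omega)
        rwa [hp1] at this
      rcases lt_or_eq_of_le hle with h | h
      · exact h
      · exact absurd (h ▸ hgp) (hgp ▸ hne)
  -- upper bound: for every i ≤ k, Av(i,q) ≤ g k
  have hupper : ∀ i ∈ Icc 1 k,
      (∑ l ∈ Icc i q, w l * z l) / (∑ l ∈ Icc i q, w l) ≤ g k := by
    intro i hi
    rw [mem_Icc] at hi
    have hiq : i ≤ q := le_trans hi.2 hkq
    rw [div_le_iff₀ (hWpos i q hi.1 hiq hqM)]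
    have hs := hsplit i q hi.1 (by omega) hqM
    rw [hTq] at hs
    have hnn : 0 ≤ ∑ l ∈ Icc i q, w l * (g l - z l) := by
      rw [hs]; simpa using ht1 (i - 1)
    have hsub : ∑ l ∈ Icc i q, w l * (g l - z l)
        = (∑ l ∈ Icc i q, w l * g l) - ∑ l ∈ Icc i q, w l * z l := by
      rw [← Finset.sum_sub_distrib]
      exact Finset.sum_congr rfl fun l _ => by ring
    have hbd : ∑ l ∈ Icc i q, w l * g l ≤ ∑ l ∈ Icc i q, w l * g k := by
      refine Finset.sum_le_sum fun l hl => ?_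
      rw [mem_Icc] at hl
      refine mul_le_mul_of_nonneg_left ?_ (le_of_lt (hw l (by rw [mem_Icc]; omega)))
      rw [← hgq]
      exact hchain l q (by omega) hl.2 hqM
    have hmul : ∑ l ∈ Icc i q, w l * g k = (∑ l ∈ Icc i q, w l) * g k := by
      rw [Finset.sum_mul]
    linarith
  -- lower bound: for every j ≥ k, g k ≤ Av(p,j)
  have hlower : ∀ j ∈ Icc k M,
      g k ≤ (∑ l ∈ Icc p j, w l * z l) / (∑ l ∈ Icc p j, w l) := by
    intro j hj
    rw [mem_Icc] at hj
    have hpj : p ≤ j := le_trans hpk hj.1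
    rw [le_div_iff₀ (hWpos p j h1p hpj hj.2)]
    have hs := hsplit p j h1p (by omega) hj.2
    rw [hTp] at hs
    have hnp : ∑ l ∈ Icc p j, w l * (g l - z l) ≤ 0 := by
      rw [hs]
      have := ht1 j
      linarith
    have hsub : ∑ l ∈ Icc p j, w l * (g l - z l)
        = (∑ l ∈ Icc p j, w l * g l) - ∑ l ∈ Icc p j, w l * z l := by
      rw [← Finset.sum_sub_distrib]
      exact Finset.sum_congr rfl fun l _ => by ring
    have hbd : ∑ l ∈ Icc p j, w l * g k ≤ ∑ l ∈ Icc p j, w l * g l := by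
      refine Finset.sum_le_sum fun l hl => ?_
      rw [mem_Icc] at hl
      refine mul_le_mul_of_nonneg_left ?_ (le_of_lt (hw l (by rw [mem_Icc]; omega)))
      rw [← hgp]
      exact hchain p l h1p hl.1 (by omega)
    have hmul : ∑ l ∈ Icc p j, w l * g k = (∑ l ∈ Icc p j, w l) * g k := by
      rw [Finset.sum_mul]
    linarith
  refine le_antisymm ?_ ?_
  · refine Finset.sup'_le _ _ fun i hi => ?_
    exact le_trans (Finset.inf'_le _ (mem_Icc.mpr ⟨hkq, hqM⟩)) (hupper i hi)
  · refine le_trans ?_ (Finset.le_sup' _ (mem_Icc.mpr ⟨h1p, hpk⟩))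
    exact Finset.le_inf' _ _ fun j hj => hlower j hj

private lemma main_aux (M : ℕ) (hM : 1 ≤ M) (w z : ℕ → ℝ)
    (hw : ∀ k ∈ Finset.Icc 1 M, 0 < w k)
    (a b : ℝ) (hab : a ≤ b)
    (g : ℕ → ℝ)
    (hgmono : ∀ k, 1 ≤ k → k < M → g k ≤ g (k + 1))
    (hgmin : ∀ v : ℕ → ℝ, (∀ k, 1 ≤ k → k < M → v k ≤ v (k + 1)) →
        ∑ k ∈ Icc 1 M, w k * (z k - g k) ^ 2 ≤ ∑ k ∈ Icc 1 M, w k * (z k - v k) ^ 2)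
    (μstar : ℕ → ℝ)
    (hμg : ∀ k, 1 ≤ k → k ≤ M → μstar k = g k)
    (μ : ℕ → ℝ)
    (hμ : ∀ k, 1 ≤ k → k ≤ M → μ k = min b (max a (μstar k))) :
    (a ≤ μ 1 ∧ (∀ k, 1 ≤ k → k < M → μ k ≤ μ (k + 1)) ∧ μ M ≤ b) ∧
    (∀ ν : ℕ → ℝ,
      a ≤ ν 1 → (∀ k, 1 ≤ k → k < M → ν k ≤ ν (k + 1)) → ν M ≤ b →
      ∑ k ∈ Finset.Icc 1 M, w k * (z k - μ k) ^ 2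
        ≤ ∑ k ∈ Finset.Icc 1 M, w k * (z k - ν k) ^ 2) := by
  have hμclip : ∀ k, 1 ≤ k → k ≤ M → μ k = min b (max a (g k)) := fun k h1 h2 => by
    rw [hμ k h1 h2, hμg k h1 h2]
  constructor
  · refine ⟨?_, ?_, ?_⟩
    · rw [hμclip 1 le_rfl hM]
      exact le_min hab (le_max_left _ _)
    · intro k h1 h2
      rw [hμclip k h1 (by omega), hμclip (k + 1) (by omega) (by omega)]
      exact min_le_min le_rfl (max_le_max le_rfl (hgmono k h1 h2))
    · rw [hμclip M hM le_rfl]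
      exact min_le_left _ _
  · intro ν hν1 hνmono hνM
    set μ' : ℕ → ℝ := fun k => min b (max a (g k)) with hμ'
    have hμeq : ∀ k ∈ Finset.Icc 1 M, μ k = μ' k := fun k hk => by
      rw [Finset.mem_Icc] at hk; exact hμclip k hk.1 hk.2
    have hνchain := chain_mono ν M hνmono
    -- pointwise: clipping term
    have hpt : ∀ k ∈ Finset.Icc 1 M, 0 ≤ w k * (μ' k - g k) * (ν k - μ' k) := by
      intro k hk
      have hwk := hw k hk
      rw [Finset.mem_Icc] at hk
      have hνa : a ≤ ν k := le_trans hν1 (hνchain 1 k le_rfl hk.1 hk.2)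
      have hνb : ν k ≤ b := le_trans (hνchain k M hk.1 hk.2 le_rfl) hνM
      rcases lt_or_ge (g k) a with hga | hga
      · have hμ'k : μ' k = a := by
          rw [hμ']
          simp only []
          rw [max_eq_left hga.le, min_eq_right hab]
        rw [hμ'k]
        exact mul_nonneg (mul_nonneg hwk.le (by linarith)) (by linarith)
      · rcases le_or_gt (g k) b with hgb | hgb
        · have hμ'k : μ' k = g k := by
            rw [hμ']
            simp only []
            rw [max_eq_right hga, min_eq_right hgb]
          rw [hμ'k]
          nlinarith
        · have hμ'k : μ' k = b := by
            rw [hμ']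
            simp only []
            rw [max_eq_right hga, min_eq_left hgb.le]
          rw [hμ'k, mul_assoc]
          have h9 : 0 ≤ (b - g k) * (ν k - b) := by nlinarith
          exact mul_nonneg hwk.le h9
    -- variational inequality term
    have hVI : 0 ≤ ∑ k ∈ Finset.Icc 1 M, w k * (g k - z k) * (ν k - μ' k) := by
      refine vi_lemma M w z g hgmin (fun k => ν k - μ' k) 1 one_pos ?_
      intro t ht k h1 h2
      have hg := hgmono k h1 h2
      have hd : g k - min b (max a (g k)) ≤ g (k + 1) - min b (max a (g (k + 1))) :=
        clip_diff_mono hab hg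
      have hν := hνmono k h1 h2
      have hξ : ν k + (g k - μ' k) ≤ ν (k + 1) + (g (k + 1) - μ' (k + 1)) := by
        simp only [hμ']
        linarith
      have e1 : (1 - t) * (g k - g (k + 1)) ≤ 0 :=
        mul_nonpos_of_nonneg_of_nonpos (by linarith [ht.2]) (by linarith)
      have e2 : t * ((ν k + (g k - μ' k)) - (ν (k + 1) + (g (k + 1) - μ' (k + 1)))) ≤ 0 :=
        mul_nonpos_of_nonneg_of_nonpos ht.1.le (by linarith)
      have hid : g k + t * (ν k - μ' k) - (g (k + 1) + t * (ν (k + 1) - μ' (k + 1)))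
          = (1 - t) * (g k - g (k + 1))
            + t * ((ν k + (g k - μ' k)) - (ν (k + 1) + (g (k + 1) - μ' (k + 1)))) := by
        ring
      linarith
    have hsum2 : 0 ≤ ∑ k ∈ Finset.Icc 1 M, w k * (μ' k - g k) * (ν k - μ' k) :=
      Finset.sum_nonneg hpt
    have htot : 0 ≤ ∑ k ∈ Finset.Icc 1 M, w k * (μ' k - z k) * (ν k - μ' k) := by
      have hrw : ∀ k ∈ Finset.Icc 1 M, w k * (μ' k - z k) * (ν k - μ' k)
          = w k * (g k - z k) * (ν k - μ' k) + w k * (μ' k - g k) * (ν k - μ' k) :=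
        fun k _ => by ring
      rw [Finset.sum_congr rfl hrw, Finset.sum_add_distrib]
      linarith
    have hq : 0 ≤ ∑ k ∈ Finset.Icc 1 M, w k * (ν k - μ' k) ^ 2 :=
      Finset.sum_nonneg fun k hk => mul_nonneg (hw k hk).le (sq_nonneg _)
    have hstep : ∑ k ∈ Finset.Icc 1 M, w k * (z k - μ k) ^ 2
        = ∑ k ∈ Finset.Icc 1 M, w k * (z k - μ' k) ^ 2 :=
      Finset.sum_congr rfl fun k hk => by rw [hμeq k hk]
    rw [hstep]
    have hexp : ∀ k ∈ Finset.Icc 1 M, w k * (z k - ν k) ^ 2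
        = w k * (z k - μ' k) ^ 2 + 2 * (w k * (μ' k - z k) * (ν k - μ' k))
          + w k * (ν k - μ' k) ^ 2 := fun k _ => by ring
    rw [Finset.sum_congr rfl hexp, Finset.sum_add_distrib, Finset.sum_add_distrib,
      ← Finset.mul_sum]
    linarith

theorem stmt_3 (M : ℕ) (hM : 1 ≤ M) (w z : ℕ → ℝ)
    (hw : ∀ k ∈ Finset.Icc 1 M, 0 < w k)
    (a b : ℝ) (hab : a ≤ b)
    (μstar : ℕ → ℝ)
    (hμstar : ∀ k, ∀ (h1 : 1 ≤ k) (h2 : k ≤ M),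
      μstar k = (Finset.Icc 1 k).sup' (Finset.nonempty_Icc.mpr h1)
        (fun i => (Finset.Icc k M).inf' (Finset.nonempty_Icc.mpr h2)
          (fun j => (∑ l ∈ Finset.Icc i j, w l * z l) / (∑ l ∈ Finset.Icc i j, w l))))
    (μ : ℕ → ℝ)
    (hμ : ∀ k, 1 ≤ k → k ≤ M → μ k = min b (max a (μstar k))) :
    (a ≤ μ 1 ∧ (∀ k, 1 ≤ k → k < M → μ k ≤ μ (k + 1)) ∧ μ M ≤ b) ∧
    (∀ ν : ℕ → ℝ,
      a ≤ ν 1 → (∀ k, 1 ≤ k → k < M → ν k ≤ ν (k + 1)) → ν M ≤ b →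
      ∑ k ∈ Finset.Icc 1 M, w k * (z k - μ k) ^ 2
        ≤ ∑ k ∈ Finset.Icc 1 M, w k * (z k - ν k) ^ 2) := by
  obtain ⟨g, hgmono, hgmin⟩ := exists_min M hM w z hw
  obtain ⟨ht1, ht2, ht3⟩ := tail_props M hM w z g hgmono hgmin
  have hμg : ∀ k, 1 ≤ k → k ≤ M → μstar k = g k := fun k h1 h2 =>
    (hμstar k h1 h2).trans (formula_eq M hM w z g hw hgmono ht1 ht2 ht3 k h1 h2)
  exact main_aux M hM w z hw a b hab g hgmono hgmin μstar hμg μ hμ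
end

section
/- Let w_1,...,w_M > 0 and z_1,...,z_M ≥ 0. Then the minimizer of sum_{k=1}^M w_k(z_k - mu_k)^2 subject to 0 ≤ mu_1 ≤ ... ≤ mu_M equals the positive part of the unconstrained isotonic solution: mu_k = max(0, max_{1≤i≤k} min_{k≤j≤M} (sum_{l=i}^j w_l z_l)/(sum_{l=i}^j w_l)). -/
open Finset

lemma sum_split (f : ℕ → ℝ) {i q j : ℕ} (h1 : i ≤ q) (h2 : q ≤ j) :
    ∑ l ∈ Icc i j, f l = (∑ l ∈ Icc i q, f l) + ∑ l ∈ Icc (q+1) j, f l := by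
  rw [← Finset.sum_union (by
    simp only [Finset.disjoint_left, Finset.mem_Icc]; omega)]
  congr 1
  ext x
  simp only [Finset.mem_union, Finset.mem_Icc]
  omega

noncomputable def Wt (w : ℕ → ℝ) (i j : ℕ) : ℝ := ∑ l ∈ Finset.Icc i j, w l
noncomputable def Sm (w z : ℕ → ℝ) (i j : ℕ) : ℝ := ∑ l ∈ Finset.Icc i j, w l * z l
noncomputable def Av (w z : ℕ → ℝ) (i j : ℕ) : ℝ := Sm w z i j / Wt w i j

lemma Wt_pos {w : ℕ → ℝ} {i j : ℕ} (hij : i ≤ j) (hw : ∀ l ∈ Finset.Icc i j, 0 < w l) :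
    0 < Wt w i j :=
  Finset.sum_pos hw (Finset.nonempty_Icc.mpr hij)

lemma Sm_eq_Av_mul {w z : ℕ → ℝ} {i j : ℕ} (hij : i ≤ j) (hw : ∀ l ∈ Finset.Icc i j, 0 < w l) :
    Sm w z i j = Av w z i j * Wt w i j := by
  rw [Av, div_mul_cancel₀]
  exact (Wt_pos hij hw).ne'

lemma split_facts {w z : ℕ → ℝ} {i q j : ℕ} (h1 : i ≤ q) (h2 : q < j)
    (hw : ∀ l ∈ Finset.Icc i j, 0 < w l) :
    Av w z i j * Wt w i j = Av w z i q * Wt w i q + Av w z (q+1) j * Wt w (q+1) j ∧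
    Wt w i j = Wt w i q + Wt w (q+1) j ∧ 0 < Wt w i q ∧ 0 < Wt w (q+1) j := by
  have hw1 : ∀ l ∈ Finset.Icc i q, 0 < w l := fun l hl => hw l (by
    simp only [Finset.mem_Icc] at *; omega)
  have hw2 : ∀ l ∈ Finset.Icc (q+1) j, 0 < w l := fun l hl => hw l (by
    simp only [Finset.mem_Icc] at *; omega)
  have hWt : Wt w i j = Wt w i q + Wt w (q+1) j := sum_split w h1 (le_of_lt h2)
  refine ⟨?_, hWt, Wt_pos h1 hw1, Wt_pos h2 hw2⟩
  rw [← Sm_eq_Av_mul h1 hw1, ← Sm_eq_Av_mul h2 hw2,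
    ← Sm_eq_Av_mul (le_trans h1 (le_of_lt h2)) hw]
  exact sum_split (fun l => w l * z l) h1 (le_of_lt h2)

noncomputable def muf (w z : ℕ → ℝ) (M a k : ℕ) : ℝ :=
  if h : a ≤ k ∧ k ≤ M then
    (Finset.Icc a k).sup' (Finset.nonempty_Icc.mpr h.1)
      (fun i => (Finset.Icc k M).inf' (Finset.nonempty_Icc.mpr h.2) (fun j => Av w z i j))
  else 0

lemma muf_eq (w z : ℕ → ℝ) {M a k : ℕ} (h1 : a ≤ k) (h2 : k ≤ M) :
    muf w z M a k = (Finset.Icc a k).sup' (Finset.nonempty_Icc.mpr h1)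
      (fun i => (Finset.Icc k M).inf' (Finset.nonempty_Icc.mpr h2) (fun j => Av w z i j)) := by
  rw [muf, dif_pos ⟨h1, h2⟩]

lemma resid_sum {w z : ℕ → ℝ} {a k : ℕ} (hak : a ≤ k) (hw : ∀ l ∈ Finset.Icc a k, 0 < w l)
    (c : ℝ) (f : ℕ → ℝ) (hf : ∀ l, a ≤ l → l ≤ k → f l = c) :
    ∑ l ∈ Finset.Icc a k, w l * (z l - f l) = (Av w z a k - c) * Wt w a k := by
  have h1 : ∑ l ∈ Finset.Icc a k, w l * (z l - f l)
      = ∑ l ∈ Finset.Icc a k, (w l * z l - c * w l) := by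
    apply Finset.sum_congr rfl
    intro l hl
    simp only [Finset.mem_Icc] at hl
    rw [hf l hl.1 hl.2]; ring
  rw [h1, Finset.sum_sub_distrib, ← Finset.mul_sum, ← Sm, ← Wt,
    Sm_eq_Av_mul hak hw]
  ring


def Pprop (w z : ℕ → ℝ) (M a : ℕ) : Prop :=
    (∀ k, a ≤ k → k < M → muf w z M a k ≤ muf w z M a (k+1)) ∧
    (∀ k, a ≤ k → k ≤ M → 0 ≤ ∑ l ∈ Finset.Icc a k, w l * (z l - muf w z M a l)) ∧
    (∑ l ∈ Finset.Icc a M, w l * (z l - muf w z M a l) = 0) ∧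
    (∀ k, a ≤ k → k < M → muf w z M a k < muf w z M a (k+1) →
       ∑ l ∈ Finset.Icc a k, w l * (z l - muf w z M a l) = 0)

lemma core_body (w z : ℕ → ℝ) (M a : ℕ) (ha1 : 1 ≤ a) (haM : a ≤ M)
    (hw : ∀ l ∈ Finset.Icc a M, 0 < w l)
    (IH : ∀ b, a < b → b ≤ M → Pprop w z M b) : Pprop w z M a := by
  classical
  have haM' : a ∈ Finset.Icc a M := Finset.mem_Icc.mpr ⟨le_rfl, haM⟩
  set c : ℝ := (Finset.Icc a M).inf' (Finset.nonempty_Icc.mpr haM) (fun j => Av w z a j) with hc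
  -- min is attained
  obtain ⟨j0, hj0mem, hj0⟩ := Finset.exists_mem_eq_inf' (Finset.nonempty_Icc.mpr haM)
    (fun j => Av w z a j)
  -- q : the largest minimizer
  set T : Finset ℕ := (Finset.Icc a M).filter (fun j => Av w z a j = c) with hT
  have hTne : T.Nonempty := ⟨j0, Finset.mem_filter.mpr ⟨hj0mem, hj0.symm⟩⟩
  set q : ℕ := T.max' hTne with hqdef
  have hqT : q ∈ T := T.max'_mem hTne
  have hq_mem : q ∈ Finset.Icc a M := (Finset.mem_filter.mp hqT).1
  have hAq : Av w z a q = c := (Finset.mem_filter.mp hqT).2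
  have haq : a ≤ q := (Finset.mem_Icc.mp hq_mem).1
  have hqM : q ≤ M := (Finset.mem_Icc.mp hq_mem).2
  have hcle : ∀ j, a ≤ j → j ≤ M → c ≤ Av w z a j := fun j h h' =>
    Finset.inf'_le _ (Finset.mem_Icc.mpr ⟨h, h'⟩)
  have hclt : ∀ j, q < j → j ≤ M → c < Av w z a j := by
    intro j hqj hjM
    rcases lt_or_eq_of_le (hcle j (by omega) hjM) with h | h
    · exact h
    · exfalso
      have : j ∈ T := Finset.mem_filter.mpr ⟨Finset.mem_Icc.mpr ⟨by omega, hjM⟩, h.symm⟩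
      have := T.le_max' j this
      omega
  -- prefix averages of the first block are ≤ c from the right end
  have havq : ∀ i, a ≤ i → i ≤ q → Av w z i q ≤ c := by
    intro i hai hiq
    rcases eq_or_lt_of_le hai with h | h
    · rw [← h, hAq]
    · obtain ⟨p, rfl⟩ : ∃ p, i = p + 1 := ⟨i - 1, by omega⟩
      obtain ⟨e1, e2, p1, p2⟩ := split_facts (by omega : a ≤ p) (by omega : p < q)
        (fun l hl => hw l (by simp only [Finset.mem_Icc] at *; omega))
      have h3 : c ≤ Av w z a p := hcle p (by omega) (by omega)
      rw [hAq] at e1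
      by_contra hcon
      push_neg at hcon
      have e3 : c * Wt w a q = c * Wt w a p + c * Wt w (p+1) q := by rw [e2]; ring
      nlinarith [mul_nonneg (sub_nonneg.mpr h3) p1.le,
        mul_pos (sub_pos.mpr hcon) p2]
  -- averages starting after q are > c
  have hgt : ∀ j, q < j → j ≤ M → c < Av w z (q+1) j := by
    intro j hqj hjM
    obtain ⟨e1, e2, p1, p2⟩ := split_facts haq hqj
      (fun l hl => hw l (by simp only [Finset.mem_Icc] at *; omega))
    have h3 : c < Av w z a j := hclt j hqj hjM
    rw [hAq] at e1
    by_contra hcon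
    push_neg at hcon
    have e3 : c * Wt w a j = c * Wt w a q + c * Wt w (q+1) j := by rw [e2]; ring
    nlinarith [mul_pos (sub_pos.mpr h3) (by linarith : (0:ℝ) < Wt w a j),
      mul_nonneg (sub_nonneg.mpr hcon) p2.le]
  -- mu is c on the first block
  have hmu1 : ∀ k, a ≤ k → k ≤ q → muf w z M a k = c := by
    intro k hak hkq
    rw [muf_eq w z hak (le_trans hkq hqM)]
    apply le_antisymm
    · apply Finset.sup'_le
      intro i hi
      simp only [Finset.mem_Icc] at hi
      calc (Finset.Icc k M).inf' (Finset.nonempty_Icc.mpr (le_trans hkq hqM))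
            (fun j => Av w z i j) ≤ Av w z i q :=
            Finset.inf'_le _ (Finset.mem_Icc.mpr ⟨hkq, hqM⟩)
        _ ≤ c := havq i hi.1 (le_trans hi.2 hkq)
    · apply le_trans ?_ (Finset.le_sup' _ (Finset.mem_Icc.mpr ⟨le_rfl, hak⟩))
      apply Finset.le_inf'
      intro j hj
      simp only [Finset.mem_Icc] at hj
      exact hcle j (by omega) hj.2
  -- mu agrees with the subproblem after the first block
  have hkey : ∀ i j, a ≤ i → i ≤ q → q < j → j ≤ M → Av w z i j ≤ Av w z (q+1) j := by
    intro i j hai hiq hqj hjM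
    obtain ⟨e1, e2, p1, p2⟩ := split_facts hiq hqj
      (fun l hl => hw l (by simp only [Finset.mem_Icc] at *; omega))
    have h3 : Av w z i q ≤ c := havq i hai hiq
    have h4 : c < Av w z (q+1) j := hgt j hqj hjM
    by_contra hcon
    push_neg at hcon
    have e3 : Av w z i j * Wt w i j = Av w z i j * Wt w i q + Av w z i j * Wt w (q+1) j := by
      rw [e2]; ring
    nlinarith [mul_pos (sub_pos.mpr (lt_trans h4 hcon)) p1,
      mul_pos (sub_pos.mpr hcon) p2]
  have hmu2 : ∀ k, q < k → k ≤ M → muf w z M a k = muf w z M (q+1) k := by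
    intro k hqk hkM
    rw [muf_eq w z (by omega : a ≤ k) hkM, muf_eq w z (by omega : q+1 ≤ k) hkM]
    apply le_antisymm
    · apply Finset.sup'_le
      intro i hi
      simp only [Finset.mem_Icc] at hi
      rcases le_or_gt i q with hig | hig
      · obtain ⟨j', hj'mem, hj'⟩ := Finset.exists_mem_eq_inf'
          (Finset.nonempty_Icc.mpr hkM) (fun j => Av w z (q+1) j)
        simp only [Finset.mem_Icc] at hj'mem
        calc (Finset.Icc k M).inf' (Finset.nonempty_Icc.mpr hkM) (fun j => Av w z i j)
              ≤ Av w z i j' := Finset.inf'_le _ (Finset.mem_Icc.mpr hj'mem)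
          _ ≤ Av w z (q+1) j' := hkey i j' hi.1 hig (by omega) hj'mem.2
          _ = (Finset.Icc k M).inf' (Finset.nonempty_Icc.mpr hkM) (fun j => Av w z (q+1) j) :=
              hj'.symm
          _ ≤ _ := Finset.le_sup' (fun i => (Finset.Icc k M).inf' (Finset.nonempty_Icc.mpr hkM) (fun j => Av w z i j)) (Finset.mem_Icc.mpr ⟨le_rfl, hqk⟩)
      · exact Finset.le_sup' (fun i => (Finset.Icc k M).inf' (Finset.nonempty_Icc.mpr hkM) (fun j => Av w z i j)) (Finset.mem_Icc.mpr ⟨hig, hi.2⟩)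
    · apply Finset.sup'_le
      intro i hi
      simp only [Finset.mem_Icc] at hi
      exact Finset.le_sup' (fun i => (Finset.Icc k M).inf' (Finset.nonempty_Icc.mpr hkM) (fun j => Av w z i j)) (Finset.mem_Icc.mpr (⟨by omega, hi.2⟩ : a ≤ i ∧ i ≤ k))
  by_cases hqMeq : q = M
  · -- single block
    have hmuall : ∀ l, a ≤ l → l ≤ M → muf w z M a l = c := by
      intro l h h'
      exact hmu1 l h (by omega)
    refine ⟨?_, ?_, ?_, ?_⟩
    · intro k hak hkM
      rw [hmuall k hak (by omega), hmuall (k+1) (by omega) (by omega)]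
    · intro k hak hkM
      have hwk : ∀ l ∈ Finset.Icc a k, 0 < w l := fun l hl => hw l (by
        simp only [Finset.mem_Icc] at *; omega)
      rw [resid_sum hak hwk c _ (fun l h h' => hmuall l h (by omega))]
      exact mul_nonneg (sub_nonneg.mpr (hcle k hak hkM)) (Wt_pos hak hwk).le
    · rw [resid_sum haM hw c _ (fun l h h' => hmuall l h h')]
      rw [← hqMeq, hAq]
      ring
    · intro k hak hkM hlt
      rw [hmuall k hak (by omega), hmuall (k+1) (by omega) (by omega)] at hlt
      exact absurd hlt (lt_irrefl c)
  · -- recurse on [q+1, M]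
    have hqltM : q < M := lt_of_le_of_ne hqM hqMeq
    have hP := IH (q+1) (by omega) (by omega)
    unfold Pprop at hP
    obtain ⟨IHmono, IHD, IHDM, IHjump⟩ := hP
    have hwq : ∀ l ∈ Finset.Icc a q, 0 < w l := fun l hl => hw l (by
      simp only [Finset.mem_Icc] at *; omega)
    have hDq : ∑ l ∈ Finset.Icc a q, w l * (z l - muf w z M a l) = 0 := by
      rw [resid_sum haq hwq c _ (fun l h h' => hmu1 l h h'), hAq]
      ring
    have hbridge : ∀ k, q < k → k ≤ M →
        ∑ l ∈ Finset.Icc a k, w l * (z l - muf w z M a l)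
          = ∑ l ∈ Finset.Icc (q+1) k, w l * (z l - muf w z M (q+1) l) := by
      intro k hqk hkM
      rw [sum_split _ haq (by omega : q ≤ k), hDq, zero_add]
      apply Finset.sum_congr rfl
      intro l hl
      simp only [Finset.mem_Icc] at hl
      rw [hmu2 l (by omega) (by omega)]
    refine ⟨?_, ?_, ?_, ?_⟩
    · intro k hak hkM
      rcases lt_trichotomy k q with h | h | h
      · rw [hmu1 k hak (by omega), hmu1 (k+1) (by omega) (by omega)]
      · rw [h, hmu1 q haq le_rfl, hmu2 (q+1) (by omega) (by omega),
          muf_eq w z (le_rfl : q+1 ≤ q+1) (by omega)]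
        refine le_trans ?_ (Finset.le_sup'
          (fun i => (Finset.Icc (q+1) M).inf' (Finset.nonempty_Icc.mpr (by omega))
            (fun j => Av w z i j))
          (Finset.mem_Icc.mpr ⟨le_rfl, le_rfl⟩))
        apply Finset.le_inf'
        intro j hj
        simp only [Finset.mem_Icc] at hj
        exact (hgt j (by omega) hj.2).le
      · rw [hmu2 k (by omega) (by omega), hmu2 (k+1) (by omega) (by omega)]
        exact IHmono k (by omega) hkM
    · intro k hak hkM
      rcases le_or_gt k q with h | h
      · have hwk : ∀ l ∈ Finset.Icc a k, 0 < w l := fun l hl => hw l (by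
          simp only [Finset.mem_Icc] at *; omega)
        rw [resid_sum hak hwk c _ (fun l h1 h2 => hmu1 l h1 (by omega))]
        exact mul_nonneg (sub_nonneg.mpr (hcle k hak hkM)) (Wt_pos hak hwk).le
      · rw [hbridge k h hkM]
        exact IHD k (by omega) hkM
    · rw [hbridge M (by omega) le_rfl]
      exact IHDM
    · intro k hak hkM hlt
      rcases lt_trichotomy k q with h | h | h
      · rw [hmu1 k hak (by omega), hmu1 (k+1) (by omega) (by omega)] at hlt
        exact absurd hlt (lt_irrefl c)
      · rw [h]
        exact hDq
      · rw [hbridge k h (by omega)]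
        apply IHjump k (by omega) hkM
        rw [← hmu2 k (by omega) (by omega), ← hmu2 (k+1) (by omega) (by omega)]
        exact hlt

lemma core (w z : ℕ → ℝ) (M : ℕ) :
    ∀ n a, 1 ≤ a → a ≤ M → M - a ≤ n → (∀ l ∈ Finset.Icc a M, 0 < w l) →
      Pprop w z M a := by
  intro n
  induction n with
  | zero =>
    intro a ha1 haM hn hw
    exact core_body w z M a ha1 haM hw (fun b hab hbM => absurd rfl (by omega : ¬ (0:ℕ) = 0))
  | succ n IHn =>
    intro a ha1 haM hn hw
    refine core_body w z M a ha1 haM hw (fun b hab hbM => ?_)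
    exact IHn b (by omega) hbM (by omega)
      (fun l hl => hw l (by simp only [Finset.mem_Icc] at *; omega))

lemma abel_sum (f ν : ℕ → ℝ) : ∀ M, 1 ≤ M →
    ∑ k ∈ Finset.Icc 1 M, f k * ν k =
      (∑ k ∈ Finset.Ico 1 M, (∑ l ∈ Finset.Icc 1 k, f l) * (ν k - ν (k+1)))
      + (∑ l ∈ Finset.Icc 1 M, f l) * ν M := by
  intro M
  induction M with
  | zero => intro h; omega
  | succ M IH =>
    intro _
    rcases Nat.eq_zero_or_pos M with rfl | hM
    · simp
    · rw [Finset.sum_Icc_succ_top (by omega : 1 ≤ M + 1), IH hM,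
        Finset.sum_Ico_succ_top (by omega : 1 ≤ M),
        Finset.sum_Icc_succ_top (by omega : 1 ≤ M + 1)]
      ring

theorem stmt_4 (M : ℕ) (hM : 1 ≤ M) (w z : ℕ → ℝ)
    (hw : ∀ k ∈ Finset.Icc 1 M, 0 < w k)
    (hz : ∀ k ∈ Finset.Icc 1 M, 0 ≤ z k)
    (μstar : ℕ → ℝ)
    (hμstar : ∀ k, ∀ (h1 : 1 ≤ k) (h2 : k ≤ M),
      μstar k = (Finset.Icc 1 k).sup' (Finset.nonempty_Icc.mpr h1)
        (fun i => (Finset.Icc k M).inf' (Finset.nonempty_Icc.mpr h2)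
          (fun j => (∑ l ∈ Finset.Icc i j, w l * z l) / (∑ l ∈ Finset.Icc i j, w l))))
    (μ : ℕ → ℝ)
    (hμ : ∀ k, 1 ≤ k → k ≤ M → μ k = max 0 (μstar k)) :
    (0 ≤ μ 1 ∧ (∀ k, 1 ≤ k → k < M → μ k ≤ μ (k + 1))) ∧
    (∀ ν : ℕ → ℝ,
      0 ≤ ν 1 → (∀ k, 1 ≤ k → k < M → ν k ≤ ν (k + 1)) →
      ∑ k ∈ Finset.Icc 1 M, w k * (z k - μ k) ^ 2
        ≤ ∑ k ∈ Finset.Icc 1 M, w k * (z k - ν k) ^ 2) := by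
  -- μstar equals muf
  have hstar : ∀ k, 1 ≤ k → k ≤ M → μstar k = muf w z M 1 k := by
    intro k h1 h2
    rw [hμstar k h1 h2, muf_eq w z h1 h2]
    rfl
  -- averages are nonnegative
  have hAvnn : ∀ i j, 1 ≤ i → i ≤ j → j ≤ M → 0 ≤ Av w z i j := by
    intro i j h1 h2 h3
    apply div_nonneg
    · apply Finset.sum_nonneg
      intro l hl
      simp only [Finset.mem_Icc] at hl
      have hwl := hw l (Finset.mem_Icc.mpr ⟨by omega, by omega⟩)
      have hzl := hz l (Finset.mem_Icc.mpr ⟨by omega, by omega⟩)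
      positivity
    · exact (Wt_pos h2 (fun l hl => hw l (by simp only [Finset.mem_Icc] at *; omega))).le
  have hmufnn : ∀ k, 1 ≤ k → k ≤ M → 0 ≤ muf w z M 1 k := by
    intro k h1 h2
    rw [muf_eq w z h1 h2]
    refine le_trans ?_ (Finset.le_sup'
      (fun i => (Finset.Icc k M).inf' (Finset.nonempty_Icc.mpr h2) (fun j => Av w z i j))
      (Finset.mem_Icc.mpr ⟨le_rfl, h1⟩))
    apply Finset.le_inf'
    intro j hj
    simp only [Finset.mem_Icc] at hj
    exact hAvnn 1 j le_rfl (by omega) hj.2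
  -- μ equals muf on [1, M]
  have hμmuf : ∀ k, 1 ≤ k → k ≤ M → μ k = muf w z M 1 k := by
    intro k h1 h2
    rw [hμ k h1 h2, hstar k h1 h2, max_eq_right (hmufnn k h1 h2)]
  obtain ⟨Hmono, HD, HDM, Hjump⟩ := core w z M M 1 le_rfl hM (by omega) hw
  -- rewrite the residual sums in terms of μ
  have hsum_eq : ∀ k, k ≤ M →
      ∑ l ∈ Finset.Icc 1 k, w l * (z l - μ l)
        = ∑ l ∈ Finset.Icc 1 k, w l * (z l - muf w z M 1 l) := by
    intro k hk
    apply Finset.sum_congr rfl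
    intro l hl
    simp only [Finset.mem_Icc] at hl
    rw [hμmuf l hl.1 (by omega)]
  have HD' : ∀ k, 1 ≤ k → k ≤ M → 0 ≤ ∑ l ∈ Finset.Icc 1 k, w l * (z l - μ l) := by
    intro k h1 h2
    rw [hsum_eq k h2]
    exact HD k h1 h2
  have HDM' : ∑ l ∈ Finset.Icc 1 M, w l * (z l - μ l) = 0 := by
    rw [hsum_eq M le_rfl]; exact HDM
  have Hjump' : ∀ k, 1 ≤ k → k < M → μ k < μ (k + 1) →
      ∑ l ∈ Finset.Icc 1 k, w l * (z l - μ l) = 0 := by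
    intro k h1 h2 hlt
    rw [hsum_eq k (by omega)]
    apply Hjump k h1 h2
    rw [← hμmuf k h1 (by omega), ← hμmuf (k+1) (by omega) (by omega)]
    exact hlt
  have Hmono' : ∀ k, 1 ≤ k → k < M → μ k ≤ μ (k + 1) := by
    intro k h1 h2
    rw [hμmuf k h1 (by omega), hμmuf (k+1) (by omega) (by omega)]
    exact Hmono k h1 h2
  refine ⟨⟨by rw [hμmuf 1 le_rfl hM]; exact hmufnn 1 le_rfl hM, Hmono'⟩, ?_⟩
  intro ν hν0 hνmono
  set f : ℕ → ℝ := fun l => w l * (z l - μ l) with hf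
  -- ∑ f μ = 0
  have hfμ : ∑ k ∈ Finset.Icc 1 M, f k * μ k = 0 := by
    rw [abel_sum f μ M hM, HDM', zero_mul, add_zero]
    apply Finset.sum_eq_zero
    intro k hk
    simp only [Finset.mem_Ico] at hk
    rcases eq_or_lt_of_le (Hmono' k hk.1 hk.2) with h | h
    · rw [h, sub_self, mul_zero]
    · rw [Hjump' k hk.1 hk.2 h, zero_mul]
  -- ∑ f ν ≤ 0
  have hfν : ∑ k ∈ Finset.Icc 1 M, f k * ν k ≤ 0 := by
    rw [abel_sum f ν M hM, HDM', zero_mul, add_zero]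
    apply Finset.sum_nonpos
    intro k hk
    simp only [Finset.mem_Ico] at hk
    exact mul_nonpos_of_nonneg_of_nonpos (HD' k hk.1 (by omega))
      (by linarith [hνmono k hk.1 hk.2])
  -- expand squares
  have expand : ∑ k ∈ Finset.Icc 1 M, w k * (z k - ν k) ^ 2
      = ∑ k ∈ Finset.Icc 1 M, w k * (z k - μ k) ^ 2
        + ∑ k ∈ Finset.Icc 1 M, w k * (μ k - ν k) ^ 2
        + 2 * (∑ k ∈ Finset.Icc 1 M, f k * μ k - ∑ k ∈ Finset.Icc 1 M, f k * ν k) := by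
    rw [← Finset.sum_sub_distrib, Finset.mul_sum, ← Finset.sum_add_distrib,
      ← Finset.sum_add_distrib]
    apply Finset.sum_congr rfl
    intro k hk
    simp only [hf]
    ring
  have hsq : 0 ≤ ∑ k ∈ Finset.Icc 1 M, w k * (μ k - ν k) ^ 2 := by
    apply Finset.sum_nonneg
    intro k hk
    have := hw k hk
    positivity
  rw [expand, hfμ]
  linarith
end

section
/- Let d_0 < d_1 < ... < d_M and R_0 > R_1 > ... > R_M be real sequences and sigma^2/n > 0. Define gamma_k = (sigma^2/n) * min_{k ≤ i ≤ M} max_{0 ≤ j < k} (d_i - d_j)/(R_j - R_i) for k = 1,...,M, and gamma_0 = 0, gamma_{M+1} = +infinity. Let lambda > 0 and let m_tilde = max{ k in {0,1,...,M} : gamma_k < 1/lambda }. Then for every j with 0 ≤ j < m_tilde, R_{m_tilde} + (lambda sigma^2/n) d_{m_tilde} < R_j + (lambda sigma^2/n) d_j, and for every j with m_tilde < j ≤ M, R_{m_tilde} + (lambda sigma^2/n) d_{m_tilde} ≤ R_j + (lambda sigma^2/n) d_j. In particular, m_tilde is a minimizer of k ↦ R_k + (lambda sigma^2/n) d_k,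 and it is the smallest such minimizer. -/
theorem stmt_5 (M : ℕ) (hM : 1 ≤ M) (d R : ℕ → ℝ)
    (hd : ∀ k, k < M → d k < d (k + 1))
    (hR : ∀ k, k < M → R (k + 1) < R k)
    (c : ℝ) (hc : 0 < c)  -- c = σ²/n
    (γ : ℕ → ℝ) (hγ0 : γ 0 = 0)
    (hγ : ∀ k, ∀ (h1 : 1 ≤ k) (h2 : k ≤ M),
      γ k = c * (Finset.Icc k M).inf' (Finset.nonempty_Icc.mpr h2)
        (fun i => (Finset.Icc 0 (k - 1)).sup' (Finset.nonempty_Icc.mpr (Nat.zero_le _))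
          (fun j => (d i - d j) / (R j - R i))))
    (lam : ℝ) (hlam : 0 < lam)
    (mt : ℕ) (hmt1 : mt ≤ M) (hmt2 : γ mt < 1 / lam)
    (hmt3 : ∀ k, k ≤ M → γ k < 1 / lam → k ≤ mt) :
    (∀ j, j < mt → R mt + lam * c * d mt < R j + lam * c * d j) ∧
    (∀ j, mt < j → j ≤ M → R mt + lam * c * d mt ≤ R j + lam * c * d j) ∧
    (∀ k, k ≤ M → R mt + lam * c * d mt ≤ R k + lam * c * d k) ∧
    (∀ k, k ≤ M → (∀ k', k' ≤ M → R k + lam * c * d k ≤ R k' + lam * c * d k') → mt ≤ k) := by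
  have hRm : ∀ a b : ℕ, a < b → b ≤ M → R b < R a := by
    intro a b hab hbM
    induction b with
    | zero => omega
    | succ n ih =>
      rcases Nat.lt_succ_iff_lt_or_eq.mp hab with h | h
      · exact lt_trans (hR n (by omega)) (ih h (by omega))
      · subst h; exact hR a (by omega)
  have conv_lt : ∀ i j : ℕ, j < i → i ≤ M →
      c * ((d i - d j) / (R j - R i)) < 1 / lam →
      R i + lam * c * d i < R j + lam * c * d j := by
    intro i j hji hiM h
    have hp : 0 < R j - R i := sub_pos.mpr (hRm j i hji hiM)
    have h' : (c * (d i - d j)) / (R j - R i) < 1 / lam := by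
      rw [mul_div_assoc]; exact h
    have := (div_lt_div_iff₀ hp hlam).mp h'
    nlinarith
  have conv_le : ∀ i j : ℕ, j < i → i ≤ M →
      1 / lam ≤ c * ((d i - d j) / (R j - R i)) →
      R j + lam * c * d j ≤ R i + lam * c * d i := by
    intro i j hji hiM h
    have hp : 0 < R j - R i := sub_pos.mpr (hRm j i hji hiM)
    have h' : 1 / lam ≤ (c * (d i - d j)) / (R j - R i) := by
      rw [mul_div_assoc]; exact h
    have := (div_le_div_iff₀ hlam hp).mp h'
    nlinarith
  have key1 : ∀ j, j < mt → R mt + lam * c * d mt < R j + lam * c * d j := by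
    intro j hj
    have hmt0 : 1 ≤ mt := by omega
    have e := hγ mt hmt0 hmt1
    rw [e] at hmt2
    obtain ⟨i0, hi0mem, hi0eq⟩ := Finset.exists_mem_eq_inf'
      (Finset.nonempty_Icc.mpr hmt1)
      (fun i => (Finset.Icc 0 (mt - 1)).sup' (Finset.nonempty_Icc.mpr (Nat.zero_le _))
        (fun j => (d i - d j) / (R j - R i)))
    rw [hi0eq] at hmt2
    obtain ⟨hi0l, hi0r⟩ := Finset.mem_Icc.mp hi0mem
    have hall : ∀ j', j' < mt → c * ((d i0 - d j') / (R j' - R i0)) < 1 / lam := by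
      intro j' hj'
      have hmem : j' ∈ Finset.Icc 0 (mt - 1) :=
        Finset.mem_Icc.mpr ⟨Nat.zero_le _, by omega⟩
      have hle := Finset.le_sup' (fun j => (d i0 - d j) / (R j - R i0)) hmem
      have : c * ((d i0 - d j') / (R j' - R i0)) ≤
          c * (Finset.Icc 0 (mt - 1)).sup' (Finset.nonempty_Icc.mpr (Nat.zero_le _))
            (fun j => (d i0 - d j) / (R j - R i0)) :=
        mul_le_mul_of_nonneg_left hle hc.le
      exact lt_of_le_of_lt this hmt2
    by_cases hcase : i0 = mt
    · subst hcase
      exact conv_lt i0 j hj hi0r (hall j hj)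
    · have hmlt : mt < i0 := lt_of_le_of_ne hi0l (Ne.symm hcase)
      have peni0 : R i0 + lam * c * d i0 < R j + lam * c * d j :=
        conv_lt i0 j (by omega) hi0r (hall j hj)
      have hγge : 1 / lam ≤ γ (mt + 1) := by
        by_contra h
        push_neg at h
        have := hmt3 (mt + 1) (by omega) h
        omega
      have e2 := hγ (mt + 1) (by omega) (by omega)
      rw [e2] at hγge
      have hi0mem2 : i0 ∈ Finset.Icc (mt + 1) M := Finset.mem_Icc.mpr ⟨by omega, hi0r⟩
      have hinfle := Finset.inf'_le
        (fun i => (Finset.Icc 0 (mt + 1 - 1)).sup' (Finset.nonempty_Icc.mpr (Nat.zero_le _))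
          (fun j => (d i - d j) / (R j - R i))) hi0mem2
      have hle2 : 1 / lam ≤ c * (Finset.Icc 0 (mt + 1 - 1)).sup'
          (Finset.nonempty_Icc.mpr (Nat.zero_le _))
          (fun j => (d i0 - d j) / (R j - R i0)) :=
        le_trans hγge (mul_le_mul_of_nonneg_left hinfle hc.le)
      obtain ⟨j0, hj0mem, hj0eq⟩ := Finset.exists_mem_eq_sup'
        (Finset.nonempty_Icc.mpr (Nat.zero_le (mt + 1 - 1)))
        (fun j => (d i0 - d j) / (R j - R i0))
      rw [hj0eq] at hle2
      have hj0le : j0 ≤ mt := by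
        have := (Finset.mem_Icc.mp hj0mem).2
        omega
      have hj0eq' : j0 = mt := by
        by_contra hne
        have hlt : j0 < mt := by omega
        exact absurd hle2 (not_le.mpr (hall j0 hlt))
      subst hj0eq'
      have hmain : R j0 + lam * c * d j0 ≤ R i0 + lam * c * d i0 :=
        conv_le i0 j0 hmlt hi0r hle2
      linarith
  have key2 : ∀ j, mt < j → j ≤ M → R mt + lam * c * d mt ≤ R j + lam * c * d j := by
    intro j
    induction j using Nat.strong_induction_on with
    | _ j ih =>
      intro hj1 hj2
      have hγge : 1 / lam ≤ γ j := by
        by_contra h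
        push_neg at h
        have := hmt3 j hj2 h
        omega
      have e := hγ j (by omega) hj2
      rw [e] at hγge
      have hjmem : j ∈ Finset.Icc j M := Finset.mem_Icc.mpr ⟨le_refl _, hj2⟩
      have hinfle := Finset.inf'_le
        (fun i => (Finset.Icc 0 (j - 1)).sup' (Finset.nonempty_Icc.mpr (Nat.zero_le _))
          (fun j' => (d i - d j') / (R j' - R i))) hjmem
      have hle2 : 1 / lam ≤ c * (Finset.Icc 0 (j - 1)).sup'
          (Finset.nonempty_Icc.mpr (Nat.zero_le _))
          (fun j' => (d j - d j') / (R j' - R j)) :=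
        le_trans hγge (mul_le_mul_of_nonneg_left hinfle hc.le)
      obtain ⟨j0, hj0mem, hj0eq⟩ := Finset.exists_mem_eq_sup'
        (Finset.nonempty_Icc.mpr (Nat.zero_le (j - 1)))
        (fun j' => (d j - d j') / (R j' - R j))
      rw [hj0eq] at hle2
      have hj0lt : j0 < j := by
        have := (Finset.mem_Icc.mp hj0mem).2
        omega
      have hpen : R j0 + lam * c * d j0 ≤ R j + lam * c * d j :=
        conv_le j j0 hj0lt hj2 hle2
      rcases lt_trichotomy j0 mt with h | h | h
      · exact le_trans (key1 j0 h).le hpen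
      · subst h; exact hpen
      · exact le_trans (ih j0 hj0lt h (by omega)) hpen
  refine ⟨key1, key2, ?_, ?_⟩
  · intro k hk
    rcases lt_trichotomy k mt with h | h | h
    · exact (key1 k h).le
    · subst h; exact le_refl _
    · exact key2 k h hk
  · intro k hkM hmin
    by_contra h
    push_neg at h
    have h1 := hmin mt hmt1
    have h2 := key1 k h
    linarith
end

section
/- The sequence gamma_k = min_{k ≤ i ≤ M} max_{0 ≤ j < k} (d_i - d_j)/(R_j - R_i), for k = 1, ..., M, is nondecreasing in k, where d_0 < d_1 < ... < d_M and R_0 > R_1 > ... > R_M are real sequences. -/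
theorem stmt_6 (M : ℕ) (d R : ℕ → ℝ)
    (hd : ∀ k, k < M → d k < d (k + 1))
    (hR : ∀ k, k < M → R (k + 1) < R k)
    (γ : ℕ → ℝ)
    (hγ : ∀ k, ∀ (h1 : 1 ≤ k) (h2 : k ≤ M),
      γ k = (Finset.Icc k M).inf' (Finset.nonempty_Icc.mpr h2)
        (fun i => (Finset.Icc 0 (k - 1)).sup' (Finset.nonempty_Icc.mpr (Nat.zero_le _))
          (fun j => (d i - d j) / (R j - R i)))) :
    ∀ k, 1 ≤ k → k < M → γ k ≤ γ (k + 1) := by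
  intro k h1 h2
  rw [hγ k h1 (le_of_lt h2), hγ (k+1) (by omega) (by omega)]
  apply Finset.le_inf'
  intro i hi
  simp only [Finset.mem_Icc] at hi
  have hmem : i ∈ Finset.Icc k M := by simp only [Finset.mem_Icc]; omega
  refine le_trans (Finset.inf'_le _ hmem) ?_
  apply Finset.sup'_mono
  intro j hj
  simp only [Finset.mem_Icc] at hj ⊢
  omega
end

section
/- Let 0 < eta < 1 and consider minimizing (eta/(1-eta)) R_0 c_1 + sum_{k=1}^M Delta R_k ( c_k - (1/2)( (2-eta)/(1-eta) - (2/(1-eta)) (sigma^2/n)(Delta d_k / Delta R_k) ) )^2 subject to 1 = c_1 ≥ c_2 ≥ ... ≥ c_M ≥ 0, where Delta R_k > 0 and Delta d_k > 0. Writing beta_k = 1 - c_k, the minimizer satisfies beta_1 = 0 and, for k = 2,...,M, beta_k = 1 - clip( (1/(1-eta)) ( 1 - eta/2 - (sigma^2/n) min_{k≤i≤M} max_{1≤j<k} (d_i - d_j)/(R_j - R_i) ) ), where clip(z) = min(1, max(0, z)). -/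
/-!
The decreasing affine map `L z = (1 - η / 2 - c z) / (1 - η)` (`coeffOfSlope`) carries the
target `(1/2)((2 - η)/(1 - η) - (2/(1 - η)) c Δd_k/ΔR_k)` to `L s_k`, `s_k = Δd_k / ΔR_k`,
and `L A = 1`, `L B = 0` for `A = η / (2c)`, `B = (2 - η) / (2c)`. Writing `c_k = L u_k`, the
problem becomes weighted isotonic regression of the local slopes `s_k` (weights `ΔR_k`) subject
to `A = u_1 ≤ u_2 ≤ ⋯ ≤ u_M ≤ B`.

The min–max values `V_k` (`minMaxSlope`) are the slopes of the convex minorant `F` of the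
points `(-R_k, d_k)`: `V` is nondecreasing and `F ≤ d`, with equality at `M` and wherever `V`
jumps. Clipping `V` to `[A, B]` gives explicit KKT multipliers: the cumulative residuals
`G_k = ∑_{1 < m ≤ k} ΔR_m (u_m - s_m)` satisfy `G_{k-1} ≤ G_M + ν`, with equality wherever
the clipped solution jumps, where `ν` is the weighted excess of `V` over `B` (nonzero only if
`u_M = B`). Abel summation turns this into the variational inequality, hence optimality.
-/

open Finset

noncomputable section

theorem Finset.sum_mul_sq_le_of_sum_mul_nonneg {ι : Type*} (S : Finset ι) {w s u v : ι → ℝ}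
    (hw : ∀ k ∈ S, 0 ≤ w k) (h : 0 ≤ ∑ k ∈ S, w k * (u k - s k) * (v k - u k)) :
    ∑ k ∈ S, w k * (u k - s k) ^ 2 ≤ ∑ k ∈ S, w k * (v k - s k) ^ 2 := by
  have hsq : 0 ≤ ∑ k ∈ S, w k * (v k - u k) ^ 2 :=
    sum_nonneg fun k hk ↦ mul_nonneg (hw k hk) (sq_nonneg _)
  have hexp : ∑ k ∈ S, w k * (v k - s k) ^ 2 = ∑ k ∈ S, w k * (u k - s k) ^ 2
      + ∑ k ∈ S, w k * (v k - u k) ^ 2 + 2 * ∑ k ∈ S, w k * (u k - s k) * (v k - u k) := by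
    rw [mul_sum, ← sum_add_distrib, ← sum_add_distrib]
    exact sum_congr rfl fun k _ ↦ by ring
  linarith

def cumResidual (w s u : ℕ → ℝ) (k : ℕ) : ℝ :=
  ∑ m ∈ Ioc 1 k, w m * (u m - s m)

theorem sum_mul_sub_mul_sub_nonneg_of_cumResidual {M : ℕ} {w s u v : ℕ → ℝ} {B ν : ℝ}
    (hle : ∀ k ∈ Ioc 1 M, cumResidual w s u (k - 1) ≤ cumResidual w s u M + ν)
    (heq : ∀ k ∈ Ioc 1 M, u (k - 1) < u k →
      cumResidual w s u (k - 1) = cumResidual w s u M + ν)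
    (hν : 0 ≤ ν) (hνB : u M < B → ν = 0)
    (hv1 : v 1 = u 1) (hv : ∀ k ∈ Ioc 1 M, v (k - 1) ≤ v k) (hvB : v M ≤ B) :
    0 ≤ ∑ k ∈ Icc 1 M, w k * (u k - s k) * (v k - u k) := by
  rcases Nat.eq_zero_or_pos M with rfl | hM
  · simp
  set G := cumResidual w s u
  set x := fun k ↦ v k - u k
  -- `G M + ν - G (k - 1)` is the KKT multiplier of `v (k - 1) ≤ v k`, `ν` that of `v M ≤ B`
  have hmult : ∀ k ∈ Ioc 1 M, 0 ≤ (G M + ν - G (k - 1)) * (x k - x (k - 1)) := by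
    intro k hk
    by_cases hu : u (k - 1) < u k
    · simp [heq k hk hu]
    · exact mul_nonneg (by linarith [hle k hk]) (by linarith [hv k hk, not_lt.1 hu])
  have hpartial : ∀ n, 1 ≤ n → n ≤ M →
      -(G M + ν - G n) * x n ≤ ∑ k ∈ Ioc 1 n, w k * (u k - s k) * x k := by
    intro n hn
    induction n, hn using Nat.le_induction with
    | base => simp [x, hv1]
    | succ n hn ih =>
      intro hnM
      have hstep := hmult (n + 1) (mem_Ioc.2 ⟨by omega, hnM⟩)
      have hG : G (n + 1) = G n + w (n + 1) * (u (n + 1) - s (n + 1)) := sum_Ioc_succ_top hn _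
      rw [Nat.add_sub_cancel] at hstep
      rw [sum_Ioc_succ_top hn, hG]
      linarith [ih (by omega)]
  have hlast : 0 ≤ -ν * x M := by
    rcases lt_or_ge (u M) B with hu | hu
    · simp [hνB hu]
    · exact mul_nonneg_of_nonpos_of_nonpos (by linarith) (by simp only [x]; linarith)
  rw [Icc_eq_cons_Ioc hM, sum_cons, hv1, sub_self, mul_zero, zero_add]
  have := hpartial M hM le_rfl
  rw [add_sub_cancel_left] at this
  exact hlast.trans this

def chordSlope (d R : ℕ → ℝ) (j i : ℕ) : ℝ := (d i - d j) / (R j - R i)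

theorem min_le_chordSlope {d R : ℕ → ℝ} {j k i : ℕ} (hjk : R k < R j) (hki : R i < R k) :
    min (chordSlope d R j k) (chordSlope d R k i) ≤ chordSlope d R j i := by
  have hj := (le_div_iff₀ (sub_pos.2 hjk)).1
    (min_le_left (chordSlope d R j k) (chordSlope d R k i))
  have hi := (le_div_iff₀ (sub_pos.2 hki)).1
    (min_le_right (chordSlope d R j k) (chordSlope d R k i))
  show _ ≤ (d i - d j) / (R j - R i)
  rw [le_div_iff₀ (by linarith)]
  linarith

def minMaxSlope (M : ℕ) (d R : ℕ → ℝ) (k : ℕ) : ℝ :=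
  if h : 2 ≤ k ∧ k ≤ M then
    (Icc k M).inf' (nonempty_Icc.mpr h.2) fun i ↦
      (Icc 1 (k - 1)).sup' (nonempty_Icc.mpr (Nat.le_sub_of_add_le h.1))
        fun j ↦ chordSlope d R j i
  else 0

def convexMinorant (M : ℕ) (d R : ℕ → ℝ) (k : ℕ) : ℝ :=
  d 1 + ∑ m ∈ Ioc 1 k, (R (m - 1) - R m) * minMaxSlope M d R m

section MinMaxSlope

variable {M : ℕ} {d R : ℕ → ℝ}

theorem minMaxSlope_eq {k : ℕ} (hk : 2 ≤ k) (hkM : k ≤ M) :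
    minMaxSlope M d R k = (Icc k M).inf' (nonempty_Icc.mpr hkM) fun i ↦
      (Icc 1 (k - 1)).sup' (nonempty_Icc.mpr (Nat.le_sub_of_add_le hk))
        fun j ↦ chordSlope d R j i :=
  dif_pos ⟨hk, hkM⟩

theorem exists_minMaxSlope_le_chordSlope {k i : ℕ} (hk : 2 ≤ k) (hki : k ≤ i)
    (hiM : i ≤ M) :
    ∃ j ∈ Ico 1 k, minMaxSlope M d R k ≤ chordSlope d R j i := by
  obtain ⟨j, hj, hje⟩ := exists_mem_eq_sup' (s := Icc 1 (k - 1))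
    (nonempty_Icc.mpr (Nat.le_sub_of_add_le hk)) fun j ↦ chordSlope d R j i
  refine ⟨j, by simp only [mem_Icc, mem_Ico] at hj ⊢; omega, ?_⟩
  rw [minMaxSlope_eq hk (hki.trans hiM), ← hje]
  exact inf'_le _ (mem_Icc.2 ⟨hki, hiM⟩)

theorem exists_chordSlope_le_minMaxSlope {k : ℕ} (hk : 2 ≤ k) (hkM : k ≤ M) :
    ∃ i ∈ Icc k M, ∀ j ∈ Ico 1 k, chordSlope d R j i ≤ minMaxSlope M d R k := by
  obtain ⟨i, hi, hie⟩ := exists_mem_eq_inf' (nonempty_Icc.mpr hkM) fun i ↦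
    (Icc 1 (k - 1)).sup' (nonempty_Icc.mpr (Nat.le_sub_of_add_le hk)) fun j ↦ chordSlope d R j i
  refine ⟨i, hi, fun j hj ↦ ?_⟩
  rw [minMaxSlope_eq hk hkM, hie]
  exact le_sup' (fun j ↦ chordSlope d R j i) (by simp only [mem_Icc, mem_Ico] at hj ⊢; omega)

theorem minMaxSlope_monotoneOn : MonotoneOn (minMaxSlope M d R) (Set.Icc 2 M) := by
  refine monotoneOn_of_le_add_one Set.ordConnected_Icc fun k _ hk hk1 ↦ ?_
  obtain ⟨i, hi, hiV⟩ := exists_chordSlope_le_minMaxSlope (d := d) (R := R) hk1.1 hk1.2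
  rw [mem_Icc] at hi
  obtain ⟨j, hj, hjV⟩ := exists_minMaxSlope_le_chordSlope (M := M) (d := d) (R := R) hk.1
    (by omega) hi.2
  exact hjV.trans (hiV j (by simp only [mem_Ico] at hj ⊢; omega))

theorem chordSlope_le_minMaxSlope_last {j : ℕ} (hj : j ∈ Ico 1 M) :
    chordSlope d R j M ≤ minMaxSlope M d R M := by
  rw [mem_Ico] at hj
  rw [minMaxSlope_eq (by omega) le_rfl]
  refine le_inf' _ _ fun i hi ↦ ?_
  obtain rfl : i = M := by simp only [mem_Icc] at hi; omega
  exact le_sup' (fun j ↦ chordSlope d R j i) (by simp only [mem_Icc]; omega)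

theorem chordSlope_le_minMaxSlope_of_lt (hR : StrictAntiOn R (Set.Iic M)) {j k : ℕ} (hkM : k < M)
    (hV : minMaxSlope M d R k < minMaxSlope M d R (k + 1)) (hj : j ∈ Ico 1 k) :
    chordSlope d R j k ≤ minMaxSlope M d R k := by
  have hk : 2 ≤ k := by simp only [mem_Ico] at hj; omega
  obtain ⟨i, hi, hiV⟩ := exists_chordSlope_le_minMaxSlope (d := d) (R := R) hk hkM.le
  rw [mem_Icc] at hi
  obtain rfl | hki := hi.1.eq_or_lt
  · exact hiV j hj
  -- otherwise `minMaxSlope M d R (k + 1) ≤ minMaxSlope M d R k`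
  have hsteep : minMaxSlope M d R k < chordSlope d R k i := by
    obtain ⟨j', hj', hj'V⟩ := exists_minMaxSlope_le_chordSlope (M := M) (d := d) (R := R)
      (by omega : 2 ≤ k + 1) hki hi.2
    rw [mem_Ico] at hj'
    obtain rfl | hj'k := (Nat.lt_succ_iff.1 hj'.2).eq_or_lt
    · exact hV.trans_le hj'V
    · exact absurd (hj'V.trans (hiV j' (mem_Ico.2 ⟨hj'.1, hj'k⟩))) hV.not_ge
  rw [mem_Ico] at hj
  have hmediant := min_le_chordSlope (d := d) (hR (Set.mem_Iic.2 (by omega))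
    (Set.mem_Iic.2 hkM.le) hj.2) (hR (Set.mem_Iic.2 hkM.le) (Set.mem_Iic.2 hi.2) hki)
  by_contra! hjk
  exact (lt_min hjk hsteep).not_ge (hmediant.trans (hiV j (mem_Ico.2 hj)))

theorem convexMinorant_succ {k : ℕ} (hk : 1 ≤ k) :
    convexMinorant M d R (k + 1) =
      convexMinorant M d R k + (R k - R (k + 1)) * minMaxSlope M d R (k + 1) := by
  rw [convexMinorant, convexMinorant, sum_Ioc_succ_top hk, Nat.add_sub_cancel, add_assoc]

theorem convexMinorant_le_add (hR : StrictAntiOn R (Set.Iic M)) {k : ℕ} (hk : 1 ≤ k)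
    (hkM : k ≤ M) {j : ℕ} (hj : j ∈ Icc 1 k) :
    convexMinorant M d R k ≤ d j + minMaxSlope M d R k * (R j - R k) := by
  induction k, hk using Nat.le_induction generalizing j with
  | base =>
    obtain rfl : j = 1 := by simp only [mem_Icc] at hj; omega
    simp [convexMinorant]
  | succ k hk ih =>
    rw [convexMinorant_succ hk]
    have hbelow : ∀ j ∈ Icc 1 k, convexMinorant M d R k + (R k - R (k + 1)) *
        minMaxSlope M d R (k + 1) ≤ d j + minMaxSlope M d R (k + 1) * (R j - R (k + 1)) := by
      intro j hj
      have hFk := ih (by omega) hj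
      rw [mem_Icc] at hj
      obtain rfl | hjk := hj.2.eq_or_lt
      · rw [sub_self, mul_zero, add_zero] at hFk
        linarith
      · have hV : minMaxSlope M d R k ≤ minMaxSlope M d R (k + 1) :=
          minMaxSlope_monotoneOn ⟨by omega, by omega⟩ ⟨by omega, hkM⟩ (by omega)
        have hR' : R k < R j := hR (Set.mem_Iic.2 (by omega)) (Set.mem_Iic.2 (by omega)) hjk
        nlinarith
    rcases (mem_Icc.1 hj).2.lt_or_eq with hjk | rfl
    · exact hbelow j (mem_Icc.2 ⟨(mem_Icc.1 hj).1, by omega⟩)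
    obtain ⟨j', hj', hV⟩ := exists_minMaxSlope_le_chordSlope (d := d) (R := R)
      (by omega : 2 ≤ k + 1) le_rfl hkM
    rw [mem_Ico] at hj'
    have hR' : R (k + 1) < R j' := hR (Set.mem_Iic.2 (by omega)) (Set.mem_Iic.2 hkM) hj'.2
    have hchord := (le_div_iff₀ (sub_pos.2 hR')).1 hV
    have := hbelow j' (mem_Icc.2 ⟨hj'.1, by omega⟩)
    rw [sub_self, mul_zero, add_zero]
    linarith

theorem convexMinorant_le (hR : StrictAntiOn R (Set.Iic M)) {k : ℕ} (hk : 1 ≤ k)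
    (hkM : k ≤ M) :
    convexMinorant M d R k ≤ d k := by
  simpa using convexMinorant_le_add hR hk hkM (mem_Icc.2 ⟨hk, le_rfl⟩)

theorem convexMinorant_eq_of_eq_add (hR : StrictAntiOn R (Set.Iic M)) {j k : ℕ} (hkM : k ≤ M)
    (hj : j ∈ Icc 1 k) (hF : convexMinorant M d R k = d j + minMaxSlope M d R k * (R j - R k))
    (hS : ∀ j ∈ Ico 1 k, chordSlope d R j k ≤ minMaxSlope M d R k) :
    convexMinorant M d R k = d k := by
  rw [mem_Icc] at hj
  refine (convexMinorant_le hR (by omega) hkM).antisymm ?_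
  obtain rfl | hjk := hj.2.eq_or_lt
  · simp [hF]
  have hR' : R k < R j := hR (Set.mem_Iic.2 (by omega)) (Set.mem_Iic.2 hkM) hjk
  have := (div_le_iff₀ (sub_pos.2 hR')).1 (hS j (mem_Ico.2 ⟨hj.1, hjk⟩))
  linarith

theorem exists_convexMinorant_eq_add (hR : StrictAntiOn R (Set.Iic M)) {k : ℕ} (hk : 1 ≤ k)
    (hkM : k ≤ M) :
    ∃ j ∈ Icc 1 k, convexMinorant M d R k = d j + minMaxSlope M d R k * (R j - R k) := by
  induction k, hk using Nat.le_induction with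
  | base => exact ⟨1, by simp, by simp [convexMinorant]⟩
  | succ k hk ih =>
    obtain ⟨j, hj, hF⟩ := ih (by omega)
    have hcontact : convexMinorant M d R k = d k →
        ∃ j ∈ Icc 1 (k + 1), convexMinorant M d R (k + 1) =
          d j + minMaxSlope M d R (k + 1) * (R j - R (k + 1)) :=
      fun hFk ↦ ⟨k, mem_Icc.2 ⟨hk, by omega⟩,
        by rw [convexMinorant_succ hk, hFk, mul_comm]⟩
    rw [mem_Icc] at hj
    obtain rfl | hjk := hj.2.eq_or_lt
    · exact hcontact (by simp [hF])
    have hV : minMaxSlope M d R k ≤ minMaxSlope M d R (k + 1) :=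
      minMaxSlope_monotoneOn ⟨by omega, by omega⟩ ⟨by omega, hkM⟩ (by omega)
    obtain hV | hV := hV.lt_or_eq
    · exact hcontact (convexMinorant_eq_of_eq_add hR (by omega) (mem_Icc.2 hj) hF
        fun j hj ↦ chordSlope_le_minMaxSlope_of_lt hR (by omega) hV hj)
    · refine ⟨j, mem_Icc.2 ⟨hj.1, by omega⟩, ?_⟩
      rw [convexMinorant_succ hk, hF, ← hV]
      ring

theorem convexMinorant_eq (hR : StrictAntiOn R (Set.Iic M)) {k : ℕ} (hk : 1 ≤ k) (hkM : k ≤ M)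
    (hS : ∀ j ∈ Ico 1 k, chordSlope d R j k ≤ minMaxSlope M d R k) :
    convexMinorant M d R k = d k :=
  have ⟨_, hj, hF⟩ := exists_convexMinorant_eq_add hR hk hkM
  convexMinorant_eq_of_eq_add hR hkM hj hF hS

end MinMaxSlope

theorem lt_and_lt_of_min_max_lt {A B x y : ℝ} (h : min B (max A x) < min B (max A y)) :
    A < y ∧ x < B ∧ x < y := by
  refine ⟨?_, ?_, ?_⟩ <;> by_contra! hc <;> apply h.not_ge
  · rw [max_eq_left hc]
    exact min_le_min le_rfl (le_max_left _ _)
  · exact (min_le_left _ _).trans (le_min le_rfl (hc.trans (le_max_right _ _)))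
  · gcongr

theorem min_max_eq_add_posPart_sub_posPart {A B : ℝ} (hAB : A ≤ B) (v : ℝ) :
    min B (max A v) = v + (A - v)⁺ - (v - B)⁺ := by
  rcases le_total v A with hA | hA
  · rw [posPart_eq_self.2 (by linarith), posPart_eq_zero.2 (by linarith), max_eq_left hA,
      min_eq_right hAB]
    ring
  rcases le_total v B with hB | hB
  · rw [posPart_eq_zero.2 (by linarith), posPart_eq_zero.2 (by linarith), max_eq_right hA,
      min_eq_right hB]
    ring
  · rw [posPart_eq_zero.2 (by linarith), posPart_eq_self.2 (by linarith), max_eq_right hA,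
      min_eq_left hB]
    ring

theorem Antitone.map_min_max {α β : Type*} [LinearOrder α] [LinearOrder β] {f : α → β}
    (hf : Antitone f) {A B : α} (hAB : A ≤ B) (v : α) :
    f (min B (max A v)) = min (f A) (max (f B) (f v)) := by
  rw [hf.map_min, hf.map_max, min_max_distrib_left, min_eq_right (hf hAB)]

def clippedSlope (M : ℕ) (d R : ℕ → ℝ) (A B : ℝ) (k : ℕ) : ℝ :=
  if k ≤ 1 then A else min B (max A (minMaxSlope M d R k))

section ClippedSlope

variable {M : ℕ} {d R : ℕ → ℝ} {A B : ℝ}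

theorem clippedSlope_of_two_le {k : ℕ} (hk : 2 ≤ k) :
    clippedSlope M d R A B k = min B (max A (minMaxSlope M d R k)) :=
  if_neg (by omega)

theorem le_clippedSlope (hAB : A ≤ B) (k : ℕ) : A ≤ clippedSlope M d R A B k := by
  unfold clippedSlope
  split_ifs
  exacts [le_rfl, le_min hAB (le_max_left _ _)]

theorem clippedSlope_le (hAB : A ≤ B) (k : ℕ) : clippedSlope M d R A B k ≤ B := by
  unfold clippedSlope
  split_ifs
  exacts [hAB, min_le_left _ _]

theorem clippedSlope_monotoneOn (hAB : A ≤ B) :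
    MonotoneOn (clippedSlope M d R A B) (Set.Icc 1 M) := by
  intro k hk l hl hkl
  by_cases hk1 : k ≤ 1
  · rw [clippedSlope, if_pos hk1]
    exact le_clippedSlope hAB l
  rw [clippedSlope_of_two_le (by omega), clippedSlope_of_two_le (by omega)]
  gcongr
  exact minMaxSlope_monotoneOn ⟨by omega, hk.2⟩ ⟨by omega, hl.2⟩ hkl

theorem cumResidual_clippedSlope (hR : StrictAntiOn R (Set.Iic M)) (hAB : A ≤ B) {k : ℕ}
    (hk : 1 ≤ k) (hkM : k ≤ M) :
    cumResidual (fun m ↦ R (m - 1) - R m) (fun m ↦ chordSlope d R (m - 1) m)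
        (clippedSlope M d R A B) k =
      convexMinorant M d R k - d k
        + ∑ m ∈ Ioc 1 k, (R (m - 1) - R m) * (A - minMaxSlope M d R m)⁺
        - ∑ m ∈ Ioc 1 k, (R (m - 1) - R m) * (minMaxSlope M d R m - B)⁺ := by
  induction k, hk using Nat.le_induction with
  | base => simp [cumResidual, convexMinorant]
  | succ k hk ih =>
    have hw : R k - R (k + 1) ≠ 0 :=
      (sub_pos.2 (hR (Set.mem_Iic.2 (by omega)) (Set.mem_Iic.2 hkM) (by omega))).ne'
    rw [cumResidual, sum_Ioc_succ_top hk, ← cumResidual, ih (by omega), convexMinorant_succ hk,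
      sum_Ioc_succ_top hk, sum_Ioc_succ_top hk, clippedSlope_of_two_le (by omega),
      min_max_eq_add_posPart_sub_posPart hAB, Nat.add_sub_cancel, chordSlope,
      mul_sub (R k - R (k + 1)), mul_div_cancel₀ _ hw]
    ring

theorem sub_pos_of_strictAntiOn (hR : StrictAntiOn R (Set.Iic M)) {m : ℕ} (hm : m ∈ Ioc 0 M) :
    0 < R (m - 1) - R m := by
  rw [mem_Ioc] at hm
  exact sub_pos.2 (hR (Set.mem_Iic.2 (by omega)) (Set.mem_Iic.2 hm.2) (by omega))

theorem cumResidual_clippedSlope_le (hR : StrictAntiOn R (Set.Iic M)) (hAB : A ≤ B) {k : ℕ}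
    (hk : k ∈ Ioc 1 M) :
    cumResidual (fun m ↦ R (m - 1) - R m) (fun m ↦ chordSlope d R (m - 1) m)
        (clippedSlope M d R A B) (k - 1) ≤
      cumResidual (fun m ↦ R (m - 1) - R m) (fun m ↦ chordSlope d R (m - 1) m)
        (clippedSlope M d R A B) M
        + ∑ m ∈ Ioc 1 M, (R (m - 1) - R m) * (minMaxSlope M d R m - B)⁺ := by
  rw [mem_Ioc] at hk
  rw [cumResidual_clippedSlope hR hAB (by omega) (by omega),
    cumResidual_clippedSlope hR hAB (by omega) le_rfl,
    convexMinorant_eq hR (by omega) le_rfl fun j hj ↦ chordSlope_le_minMaxSlope_last hj]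
  have hF := convexMinorant_le hR (d := d) (by omega : 1 ≤ k - 1) (by omega)
  have hα := sum_le_sum_of_subset_of_nonneg (s := Ioc 1 (k - 1)) (t := Ioc 1 M)
    (f := fun m ↦ (R (m - 1) - R m) * (A - minMaxSlope M d R m)⁺)
    (Ioc_subset_Ioc_right (show k - 1 ≤ M by omega)) fun m hm _ ↦
      mul_nonneg (sub_pos_of_strictAntiOn hR (Ioc_subset_Ioc_left (by omega) hm)).le
        (posPart_nonneg _)
  have hν : 0 ≤ ∑ m ∈ Ioc 1 (k - 1), (R (m - 1) - R m) * (minMaxSlope M d R m - B)⁺ :=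
    sum_nonneg fun m hm ↦ mul_nonneg (sub_pos_of_strictAntiOn hR
      (Ioc_subset_Ioc (by omega) (by omega) hm)).le (posPart_nonneg _)
  linarith

theorem cumResidual_clippedSlope_eq_of_lt (hR : StrictAntiOn R (Set.Iic M)) (hAB : A ≤ B)
    {k : ℕ} (hk : k ∈ Ioc 1 M)
    (hU : clippedSlope M d R A B (k - 1) < clippedSlope M d R A B k) :
    cumResidual (fun m ↦ R (m - 1) - R m) (fun m ↦ chordSlope d R (m - 1) m)
        (clippedSlope M d R A B) (k - 1) =
      cumResidual (fun m ↦ R (m - 1) - R m) (fun m ↦ chordSlope d R (m - 1) m)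
        (clippedSlope M d R A B) M
        + ∑ m ∈ Ioc 1 M, (R (m - 1) - R m) * (minMaxSlope M d R m - B)⁺ := by
  rw [mem_Ioc] at hk
  rw [clippedSlope_of_two_le hk.1] at hU
  obtain ⟨hAk, hup, hF⟩ : A < minMaxSlope M d R k ∧
      (∀ m ∈ Ioc 1 (k - 1), (R (m - 1) - R m) * (minMaxSlope M d R m - B)⁺ = 0) ∧
      convexMinorant M d R (k - 1) = d (k - 1) := by
    obtain hk1 | hk1 := (show k - 1 = 1 ∨ 2 ≤ k - 1 by omega)
    · have hA : clippedSlope M d R A B 1 = min B (max A A) := by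
        rw [clippedSlope, if_pos le_rfl, max_self, min_eq_right hAB]
      rw [hk1, hA] at hU
      rw [hk1]
      exact ⟨(lt_and_lt_of_min_max_lt hU).1, by simp, by simp [convexMinorant]⟩
    rw [clippedSlope_of_two_le hk1] at hU
    obtain ⟨hAk, hB, hV⟩ := lt_and_lt_of_min_max_lt hU
    refine ⟨hAk, fun m hm ↦ ?_, convexMinorant_eq hR (by omega) (by omega)
      fun j hj ↦ chordSlope_le_minMaxSlope_of_lt hR (by omega)
        (by rwa [Nat.sub_add_cancel (by omega)]) hj⟩
    rw [mem_Ioc] at hm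
    rw [posPart_eq_zero.2, mul_zero]
    linarith [minMaxSlope_monotoneOn (M := M) (d := d) (R := R) ⟨hm.1, by omega⟩
      ⟨hk1, by omega⟩ hm.2]
  have hlow : ∀ m ∈ Ioc (k - 1) M, (R (m - 1) - R m) * (A - minMaxSlope M d R m)⁺ = 0 := by
    intro m hm
    rw [mem_Ioc] at hm
    rw [posPart_eq_zero.2, mul_zero]
    linarith [minMaxSlope_monotoneOn (M := M) (d := d) (R := R) ⟨hk.1, hk.2⟩
      ⟨by omega, hm.2⟩ (by omega : k ≤ m)]
  rw [cumResidual_clippedSlope hR hAB (by omega) (by omega),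
    cumResidual_clippedSlope hR hAB (by omega) le_rfl,
    convexMinorant_eq hR (by omega) le_rfl fun j hj ↦ chordSlope_le_minMaxSlope_last hj, hF,
    ← sum_Ioc_consecutive _ (show 1 ≤ k - 1 by omega) (show k - 1 ≤ M by omega),
    sum_eq_zero hlow, sum_eq_zero hup]
  ring

theorem sum_posPart_sub_eq_zero_of_clippedSlope_lt (hU : clippedSlope M d R A B M < B) :
    ∑ m ∈ Ioc 1 M, (R (m - 1) - R m) * (minMaxSlope M d R m - B)⁺ = 0 := by
  refine sum_eq_zero fun m hm ↦ ?_
  rw [mem_Ioc] at hm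
  rw [clippedSlope_of_two_le (by omega)] at hU
  have hVM : minMaxSlope M d R M < B := by
    by_contra! h
    exact hU.ne (min_eq_left (h.trans (le_max_right _ _)))
  rw [posPart_eq_zero.2, mul_zero]
  linarith [minMaxSlope_monotoneOn (M := M) (d := d) (R := R) ⟨by omega, hm.2⟩
    ⟨by omega, le_rfl⟩ hm.2]

theorem sum_sq_clippedSlope_le (hR : StrictAntiOn R (Set.Iic M)) (hAB : A ≤ B) {v : ℕ → ℝ}
    (hv1 : v 1 = A) (hv : ∀ k ∈ Ioc 1 M, v (k - 1) ≤ v k) (hvB : v M ≤ B) :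
    ∑ k ∈ Icc 1 M, (R (k - 1) - R k) * (clippedSlope M d R A B k - chordSlope d R (k - 1) k) ^ 2
      ≤ ∑ k ∈ Icc 1 M, (R (k - 1) - R k) * (v k - chordSlope d R (k - 1) k) ^ 2 := by
  refine sum_mul_sq_le_of_sum_mul_nonneg _
    (fun k hk ↦ (sub_pos_of_strictAntiOn hR
      (by simp only [mem_Icc, mem_Ioc] at hk ⊢; omega)).le) ?_
  exact sum_mul_sub_mul_sub_nonneg_of_cumResidual (B := B)
    (fun k hk ↦ cumResidual_clippedSlope_le hR hAB hk)
    (fun k hk hU ↦ cumResidual_clippedSlope_eq_of_lt hR hAB hk hU)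
    (sum_nonneg fun m hm ↦ mul_nonneg (sub_pos_of_strictAntiOn hR
      (Ioc_subset_Ioc_left zero_le_one hm)).le (posPart_nonneg _))
    sum_posPart_sub_eq_zero_of_clippedSlope_lt (by rw [hv1]; rfl) hv hvB

theorem sum_sq_comp_clippedSlope_le (hR : StrictAntiOn R (Set.Iic M)) (hAB : A ≤ B)
    {L : ℝ → ℝ} {a κ : ℝ} (hκ : 0 < κ) (hL : ∀ x, L x = a - κ * x) {cs : ℕ → ℝ}
    (hcs1 : cs 1 = L A) (hcs : ∀ k ∈ Ioc 1 M, cs k ≤ cs (k - 1)) (hcsM : L B ≤ cs M) :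
    ∑ k ∈ Icc 1 M, (R (k - 1) - R k) *
        (L (clippedSlope M d R A B k) - L (chordSlope d R (k - 1) k)) ^ 2
      ≤ ∑ k ∈ Icc 1 M, (R (k - 1) - R k) * (cs k - L (chordSlope d R (k - 1) k)) ^ 2 := by
  set v : ℕ → ℝ := fun k ↦ (a - cs k) / κ
  have hcsv : ∀ k, cs k = L (v k) := fun k ↦ by
    rw [hL, mul_div_cancel₀ _ hκ.ne', sub_sub_cancel]
  rw [hL] at hcs1 hcsM
  have hopt := sum_sq_clippedSlope_le hR hAB (d := d) (v := v)
    (by rw [← mul_div_cancel_left₀ A hκ.ne', ← sub_sub_cancel a (κ * A), ← hcs1])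
    (fun k hk ↦ div_le_div_of_nonneg_right (by linarith [hcs k hk]) hκ.le)
    ((div_le_iff₀ hκ).2 (by linarith))
  calc _ = κ ^ 2 * ∑ k ∈ Icc 1 M, (R (k - 1) - R k) *
          (clippedSlope M d R A B k - chordSlope d R (k - 1) k) ^ 2 := by
        rw [mul_sum]
        exact sum_congr rfl fun k _ ↦ by rw [hL, hL]; ring
    _ ≤ κ ^ 2 * ∑ k ∈ Icc 1 M, (R (k - 1) - R k) * (v k - chordSlope d R (k - 1) k) ^ 2 :=
        mul_le_mul_of_nonneg_left hopt (sq_nonneg κ)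
    _ = _ := by
        rw [mul_sum]
        exact sum_congr rfl fun k _ ↦ by rw [hcsv k, hL, hL]; ring

end ClippedSlope

section CoeffOfSlope

variable {c η : ℝ}

def coeffOfSlope (c η z : ℝ) : ℝ := 1 / (1 - η) * (1 - η / 2 - c * z)

theorem coeffOfSlope_eq (c η z : ℝ) :
    coeffOfSlope c η z = (1 - η / 2) / (1 - η) - c / (1 - η) * z := by
  rw [coeffOfSlope]
  ring

theorem coeffOfSlope_antitone (hc : 0 ≤ c) (hη : η < 1) : Antitone (coeffOfSlope c η) :=
  fun x y hxy ↦ by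
    rw [coeffOfSlope_eq, coeffOfSlope_eq]
    exact sub_le_sub_left (mul_le_mul_of_nonneg_left hxy (div_nonneg hc (by linarith))) _

theorem coeffOfSlope_eq_one (hc : c ≠ 0) (hη : η ≠ 1) :
    coeffOfSlope c η (η / (2 * c)) = 1 := by
  rw [coeffOfSlope]
  field_simp [sub_ne_zero.2 hη.symm]
  ring

theorem coeffOfSlope_eq_zero (hc : c ≠ 0) (hη : η ≠ 1) :
    coeffOfSlope c η ((2 - η) / (2 * c)) = 0 := by
  rw [coeffOfSlope]
  field_simp [sub_ne_zero.2 hη.symm]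
  ring

theorem half_mul_sub_eq_coeffOfSlope (hη : η ≠ 1) (s : ℝ) :
    1 / 2 * ((2 - η) / (1 - η) - 2 / (1 - η) * c * s) = coeffOfSlope c η s := by
  rw [coeffOfSlope]
  field_simp [sub_ne_zero.2 hη.symm]

end CoeffOfSlope

end

theorem stmt_14_general (M : ℕ) (hM : 1 ≤ M) (d R : ℕ → ℝ)
    (hΔR : ∀ k, 1 ≤ k → k ≤ M → 0 < R (k - 1) - R k)
    (c : ℝ) (hc : 0 < c)  -- c = σ²/n
    (η : ℝ) (hη1 : η < 1)
    (βsol : ℕ → ℝ) (hβ1 : βsol 1 = 0)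
    (hβ : ∀ k, ∀ (h2 : 2 ≤ k) (hkM : k ≤ M),
      βsol k = 1 - min 1 (max 0 ((1 / (1 - η)) * (1 - η / 2 -
        c * (Finset.Icc k M).inf' (Finset.nonempty_Icc.mpr hkM)
          (fun i => (Finset.Icc 1 (k - 1)).sup'
            (Finset.nonempty_Icc.mpr (Nat.le_sub_of_add_le h2))
            (fun j => (d i - d j) / (R j - R i))))))) :
    ((1 : ℝ) - βsol 1 = 1 ∧
      (∀ k, 1 ≤ k → k < M → (1 - βsol (k + 1)) ≤ (1 - βsol k)) ∧
      0 ≤ 1 - βsol M) ∧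
    (∀ cs : ℕ → ℝ, cs 1 = 1 → (∀ k, 1 ≤ k → k < M → cs (k + 1) ≤ cs k) → 0 ≤ cs M →
      (η / (1 - η)) * R 0 * (1 - βsol 1) +
        ∑ k ∈ Finset.Icc 1 M, (R (k - 1) - R k) *
          ((1 - βsol k) - (1 / 2) * ((2 - η) / (1 - η)
            - (2 / (1 - η)) * c * ((d k - d (k - 1)) / (R (k - 1) - R k)))) ^ 2
      ≤ (η / (1 - η)) * R 0 * cs 1 +
        ∑ k ∈ Finset.Icc 1 M, (R (k - 1) - R k) *
          (cs k - (1 / 2) * ((2 - η) / (1 - η)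
            - (2 / (1 - η)) * c * ((d k - d (k - 1)) / (R (k - 1) - R k)))) ^ 2) := by
  have hR : StrictAntiOn R (Set.Iic M) :=
    strictAntiOn_of_add_one_lt Set.ordConnected_Iic fun k _ _ hk ↦ by
      simpa using hΔR (k + 1) (by omega) hk
  have hAB : η / (2 * c) ≤ (2 - η) / (2 * c) :=
    div_le_div_of_nonneg_right (by linarith) (by positivity)
  have hL := coeffOfSlope_antitone hc.le hη1
  have hLA := coeffOfSlope_eq_one hc.ne' hη1.ne
  have hLB := coeffOfSlope_eq_zero hc.ne' hη1.ne
  have hβU : ∀ k ∈ Icc 1 M, 1 - βsol k =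
      coeffOfSlope c η (clippedSlope M d R (η / (2 * c)) ((2 - η) / (2 * c)) k) := by
    intro k hk
    rw [mem_Icc] at hk
    obtain rfl | hk2 := hk.1.eq_or_lt
    · rw [hβ1, clippedSlope, if_pos le_rfl, hLA, sub_zero]
    rw [hβ k hk2 hk.2, clippedSlope_of_two_le hk2, hL.map_min_max hAB, hLA, hLB,
      minMaxSlope_eq hk2 hk.2, sub_sub_cancel]
    -- `chordSlope` unfolds to the quotient in `hβ`
    rfl
  refine ⟨⟨by rw [hβ1, sub_zero], fun k hk hkM ↦ ?_, ?_⟩, fun cs hcs1 hcs hcsM ↦ ?_⟩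
  · rw [hβU k (mem_Icc.2 ⟨hk, hkM.le⟩), hβU (k + 1) (mem_Icc.2 ⟨by omega, hkM⟩)]
    exact hL (clippedSlope_monotoneOn hAB ⟨hk, hkM.le⟩ ⟨by omega, hkM⟩ (by omega))
  · rw [hβU M (mem_Icc.2 ⟨hM, le_rfl⟩), ← hLB]
    exact hL (clippedSlope_le hAB M)
  simp only [half_mul_sub_eq_coeffOfSlope hη1.ne]
  rw [hβ1, hcs1, sub_zero, add_le_add_iff_left, sum_congr rfl fun k hk ↦ by rw [hβU k hk]]
  refine sum_sq_comp_clippedSlope_le hR hAB (div_pos hc (by linarith)) (coeffOfSlope_eq c η)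
    (hcs1.trans hLA.symm) (fun k hk ↦ ?_) (hLB.trans_le hcsM)
  rw [mem_Ioc] at hk
  simpa [Nat.sub_add_cancel hk.1.le] using hcs (k - 1) (by omega) (by omega)

theorem stmt_14 (M : ℕ) (hM : 1 ≤ M) (d R : ℕ → ℝ)
    (hΔd : ∀ k, 1 ≤ k → k ≤ M → 0 < d k - d (k - 1))
    (hΔR : ∀ k, 1 ≤ k → k ≤ M → 0 < R (k - 1) - R k)
    (c : ℝ) (hc : 0 < c)  -- c = σ²/n
    (η : ℝ) (hη0 : 0 < η) (hη1 : η < 1)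
    (βsol : ℕ → ℝ) (hβ1 : βsol 1 = 0)
    (hβ : ∀ k, ∀ (h2 : 2 ≤ k) (hkM : k ≤ M),
      βsol k = 1 - min 1 (max 0 ((1 / (1 - η)) * (1 - η / 2 -
        c * (Finset.Icc k M).inf' (Finset.nonempty_Icc.mpr hkM)
          (fun i => (Finset.Icc 1 (k - 1)).sup'
            (Finset.nonempty_Icc.mpr (Nat.le_sub_of_add_le h2))
            (fun j => (d i - d j) / (R j - R i))))))) :
    ((1 : ℝ) - βsol 1 = 1 ∧
      (∀ k, 1 ≤ k → k < M → (1 - βsol (k + 1)) ≤ (1 - βsol k)) ∧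
      0 ≤ 1 - βsol M) ∧
    (∀ cs : ℕ → ℝ, cs 1 = 1 → (∀ k, 1 ≤ k → k < M → cs (k + 1) ≤ cs k) → 0 ≤ cs M →
      (η / (1 - η)) * R 0 * (1 - βsol 1) +
        ∑ k ∈ Finset.Icc 1 M, (R (k - 1) - R k) *
          ((1 - βsol k) - (1 / 2) * ((2 - η) / (1 - η)
            - (2 / (1 - η)) * c * ((d k - d (k - 1)) / (R (k - 1) - R k)))) ^ 2
      ≤ (η / (1 - η)) * R 0 * cs 1 +
        ∑ k ∈ Finset.Icc 1 M, (R (k - 1) - R k) *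
          (cs k - (1 / 2) * ((2 - η) / (1 - η)
            - (2 / (1 - η)) * c * ((d k - d (k - 1)) / (R (k - 1) - R k)))) ^ 2) :=
  stmt_14_general M hM d R hΔR c hc η hη1 βsol hβ1 hβ
end

section
/- Let p ≥ 0, let c_0, c_1, ..., c_p, c~ be positive reals with c_0 + c_1 + ... + c_p + c~ = 1, let 0 < tau < lambda, and let t_0 < t_1 < ... < t_p < tau/lambda be reals. Suppose b~ satisfies b~ ≤ ( t_0 - (c_0 t_0 + c_1 t_1 + ... + c_p t_p) ) / c~. Then c_0 t_0^2 + c_1 t_1^2 + ... + c_p t_p^2 ≤ (c_0 t_0 + c_1 t_1 + ... + c_p t_p + c~ b~)^2 + c~ - ((lambda^2 + tau^2)/(lambda tau)) b~ c~. -/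
theorem stmt_17 (p : ℕ) (c : Fin (p + 1) → ℝ) (ctil : ℝ) (t : Fin (p + 1) → ℝ)
    (τ lam btil : ℝ)
    (hc : ∀ i, 0 < c i) (hctil : 0 < ctil)
    (hsum : ∑ i, c i + ctil = 1)
    (hτ : 0 < τ) (hτlam : τ < lam)
    (ht : StrictMono t) (htp : t (Fin.last p) < τ / lam)
    (hb : btil ≤ (t 0 - ∑ i, c i * t i) / ctil) :
    ∑ i, c i * (t i) ^ 2
      ≤ (∑ i, c i * t i + ctil * btil) ^ 2 + ctil
        - ((lam ^ 2 + τ ^ 2) / (lam * τ)) * btil * ctil := by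
  have hlam : 0 < lam := hτ.trans hτlam
  have hlτ : 0 < lam * τ := by positivity
  set K := (lam ^ 2 + τ ^ 2) / (lam * τ) with hK
  have hKeq : K * (lam * τ) = lam ^ 2 + τ ^ 2 := by
    rw [hK, div_mul_cancel₀ _ (ne_of_gt hlτ)]
  have hK2 : 2 ≤ K := by
    rw [hK, le_div_iff₀ hlτ]
    nlinarith [sq_nonneg (lam - τ)]
  set S := ∑ i, c i * t i with hS
  have htl1 : τ / lam < 1 := (div_lt_one hlam).2 hτlam
  have hti : ∀ i, t i < τ / lam := fun i =>
    lt_of_le_of_lt (ht.monotone (Fin.le_last i)) htp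
  have ht0 : ∀ i, t 0 ≤ t i := fun i => ht.monotone (Fin.zero_le i)
  have ht01 : t 0 < 1 := (hti 0).trans htl1
  -- pointwise bound on f(t) = t^2 - K t
  have hBi : ∀ i ∈ Finset.univ, c i * (t i ^ 2 - K * t i) ≤ c i * (t 0 ^ 2 - K * t 0) := by
    intro i _
    have h1 : t 0 ≤ t i := ht0 i
    have h2 : t i < 1 := (hti i).trans htl1
    have h3 : 0 ≤ c i := (hc i).le
    have hf : 0 ≤ (t i - t 0) * (K - t i - t 0) :=
      mul_nonneg (by linarith) (by linarith)
    have : t i ^ 2 - K * t i ≤ t 0 ^ 2 - K * t 0 := by nlinarith [hf]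
    exact mul_le_mul_of_nonneg_left this h3
  have hCsum : ∑ i, c i = 1 - ctil := by linarith
  have hsum' : ∑ i, c i * (t i ^ 2 - K * t i) ≤ (1 - ctil) * (t 0 ^ 2 - K * t 0) := by
    calc ∑ i, c i * (t i ^ 2 - K * t i) ≤ ∑ i, c i * (t 0 ^ 2 - K * t 0) :=
          Finset.sum_le_sum hBi
      _ = (1 - ctil) * (t 0 ^ 2 - K * t 0) := by rw [← Finset.sum_mul, hCsum]
  have hdist : ∑ i, c i * (t i ^ 2 - K * t i) = (∑ i, c i * t i ^ 2) - K * S := by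
    rw [hS, Finset.mul_sum, ← Finset.sum_sub_distrib]
    exact Finset.sum_congr rfl (fun i _ => by ring)
  -- positivity of t0^2 - K t0 + 1
  have ht0τ : t 0 < τ / lam := hti 0
  have hf1 : lam * t 0 - τ < 0 := by
    have := (lt_div_iff₀ hlam).1 ht0τ
    linarith [mul_comm (t 0) lam]
  have hf2 : τ * t 0 - lam < 0 := by nlinarith
  have hfacpos : 0 ≤ t 0 ^ 2 - K * t 0 + 1 := by
    have h : 0 < (lam * t 0 - τ) * (τ * t 0 - lam) := mul_pos_of_neg_of_neg hf1 hf2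
    nlinarith [hKeq]
  have hB : ∑ i, c i * (t i ^ 2) ≤ t 0 ^ 2 + ctil - K * t 0 + K * S := by
    have hc' : 0 ≤ ctil * (t 0 ^ 2 - K * t 0 + 1) := mul_nonneg hctil.le hfacpos
    nlinarith [hsum', hdist]
  -- step A
  have hx : S + ctil * btil ≤ t 0 := by
    have := (le_div_iff₀ hctil).1 hb
    linarith [mul_comm btil ctil]
  have hfac : 0 ≤ (t 0 - (S + ctil * btil)) * (K - t 0 - (S + ctil * btil)) :=
    mul_nonneg (by linarith) (by linarith)
  nlinarith [hB, hfac]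
end
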